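/- arXiv:2408.15132 — 6 statements merged into one kernel-verified Lean document; each statement's English description precedes it below -/
import Mathlib

section
/- Let G be a finite simple undirected graph, let h ≥ 3, and let x = |V_{C_h}(G)|. Let φ : V → ℤ/hℤ be a uniformly random coloring and fix a color c ∈ ℤ/hℤ. Let S be the random set of vertices v such that φ(v) = c and v lies on a directed h-cycle of G_φ in which v is the (unique) vertex of color c. Then E[|S|] ≥ x / h^h. -/
open Finset

section Aux
variable {V : Type*} [Fintype V] [DecidableEq V]

/-- Key counting lemma: given a rooted directed-colorable cycle through `u`,
at least `h ^ (card V - h)` colorings put `u` in `S(φ)`. -/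
lemma key_count (G : SimpleGraph V) (h : ℕ) [NeZero h] (c : ZMod h)
    (u : V) (w : ZMod h → V) (hinj : Function.Injective w)
    (hadj : ∀ i : ZMod h, G.Adj (w i) (w (i + 1))) (h0 : w 0 = u) :
    h ^ (Fintype.card V - h) ≤
      Nat.card {φ : V → ZMod h // φ u = c ∧ ∃ w' : ZMod h → V,
        Function.Injective w' ∧
        (∀ i : ZMod h, G.Adj (w' i) (w' (i + 1)) ∧ φ (w' (i + 1)) = φ (w' i) + 1) ∧
        w' 0 = u} := by
  classical
  have hrange : Fintype.card (Set.range w) = h := by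
    rw [Set.card_range_of_injective hinj, ZMod.card]
  have hcompl : Fintype.card ((Set.range w)ᶜ : Set V) = Fintype.card V - h := by
    rw [Fintype.card_compl_set, hrange]
  -- the extension map
  have hval : ∀ (g : ((Set.range w)ᶜ : Set V) → ZMod h) (j : ZMod h),
      (fun v => if hv : v ∈ Set.range w then c + hv.choose else g ⟨v, hv⟩) (w j) = c + j := by
    intro g j
    have hv : w j ∈ Set.range w := ⟨j, rfl⟩
    simp only [dif_pos hv]
    congr 1
    exact hinj hv.choose_spec
  set F : (((Set.range w)ᶜ : Set V) → ZMod h) →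
      {φ : V → ZMod h // φ u = c ∧ ∃ w' : ZMod h → V,
        Function.Injective w' ∧
        (∀ i : ZMod h, G.Adj (w' i) (w' (i + 1)) ∧ φ (w' (i + 1)) = φ (w' i) + 1) ∧
        w' 0 = u} :=
    fun g => ⟨fun v => if hv : v ∈ Set.range w then c + hv.choose else g ⟨v, hv⟩, by
      constructor
      · rw [← h0, hval g 0, add_zero]
      · refine ⟨w, hinj, fun i => ⟨hadj i, ?_⟩, h0⟩
        rw [hval g i, hval g (i + 1), add_assoc]⟩ with hF
  have hFinj : Function.Injective F := by
    intro g g' hgg'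
    funext v
    obtain ⟨v, hv⟩ := v
    have := congrFun (congrArg Subtype.val hgg') v
    simpa only [hF, dif_neg hv] using this
  calc h ^ (Fintype.card V - h) = Nat.card (((Set.range w)ᶜ : Set V) → ZMod h) := by
        rw [Nat.card_eq_fintype_card, Fintype.card_fun, ZMod.card, hcompl]
    _ ≤ _ := Nat.card_le_card_of_injective F hFinj

end Aux

/-- Let `G` be a finite simple undirected graph, `h ≥ 3`, and
`x = |V_{C_h}(G)|`. For a uniformly random coloring `φ : V → ℤ/hℤ` and a fixed color
`c : ℤ/hℤ`, let `S(φ)` be the set of vertices `v` with `φ v = c` lying on a directed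
`h`-cycle of `G_φ` (in which `v` is then automatically the unique vertex of color `c`).
Then `E[|S|] ≥ x / h^h`, where the expectation is the average of `|S(φ)|` over all `h^|V|`
colorings. -/
theorem stmt_8 {V : Type*} [Fintype V] [DecidableEq V]
    (G : SimpleGraph V) (h : ℕ) [NeZero h] (hh : 3 ≤ h) (c : ZMod h) (x : ℕ)
    (hx : x = Nat.card {u : V // ∃ w : ZMod h → V, Function.Injective w ∧
        (∀ i : ZMod h, G.Adj (w i) (w (i + 1))) ∧ ∃ i, w i = u}) :
    (x : ℝ) / (h : ℝ) ^ h ≤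
      (∑ φ : V → ZMod h,
        (Nat.card {u : V // φ u = c ∧ ∃ w : ZMod h → V, Function.Injective w ∧
            (∀ i : ZMod h, G.Adj (w i) (w (i + 1)) ∧ φ (w (i + 1)) = φ (w i) + 1) ∧
            w 0 = u} : ℝ)) /
        (h : ℝ) ^ (Fintype.card V) := by
  classical
  set n := Fintype.card V with hn
  set P : (V → ZMod h) → V → Prop := fun φ u => φ u = c ∧ ∃ w : ZMod h → V,
      Function.Injective w ∧
      (∀ i : ZMod h, G.Adj (w i) (w (i + 1)) ∧ φ (w (i + 1)) = φ (w i) + 1) ∧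
      w 0 = u with hP
  set Q : V → Prop := fun u => ∃ w : ZMod h → V, Function.Injective w ∧
      (∀ i : ZMod h, G.Adj (w i) (w (i + 1))) ∧ ∃ i, w i = u with hQ
  have hxcard : x = (Finset.univ.filter Q).card := by
    rw [hx, Nat.card_eq_fintype_card, Fintype.card_subtype]
  -- For each u with Q u, get a rooted witness and hence the key bound
  have hper : ∀ u : V, Q u →
      h ^ (n - h) ≤ (Finset.univ.filter (fun φ : V → ZMod h => P φ u)).card := by
    rintro u ⟨w, hinj, hadj, i, hi⟩
    have hinj' : Function.Injective (fun j => w (i + j)) :=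
      fun a b hab => by exact add_left_cancel (hinj hab)
    have hadj' : ∀ j : ZMod h, G.Adj (w (i + j)) (w (i + (j + 1))) := by
      intro j
      rw [← add_assoc]
      exact hadj (i + j)
    have h0 : w (i + 0) = u := by rw [add_zero, hi]
    have := key_count G h c u (fun j => w (i + j)) hinj' hadj' h0
    rwa [Nat.card_eq_fintype_card, Fintype.card_subtype] at this
  -- main counting inequality over ℕ
  have hmain : x * h ^ (n - h) ≤
      ∑ φ : V → ZMod h, (Finset.univ.filter fun u => P φ u).card := by
    calc x * h ^ (n - h) = ∑ u ∈ Finset.univ.filter Q, h ^ (n - h) := by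
          rw [Finset.sum_const, hxcard, smul_eq_mul]
      _ ≤ ∑ u ∈ Finset.univ.filter Q,
            (Finset.univ.filter (fun φ : V → ZMod h => P φ u)).card := by
          apply Finset.sum_le_sum
          intro u hu
          exact hper u (Finset.mem_filter.mp hu).2
      _ ≤ ∑ u : V, (Finset.univ.filter (fun φ : V → ZMod h => P φ u)).card :=
          Finset.sum_le_sum_of_subset (Finset.filter_subset _ _)
      _ = ∑ φ : V → ZMod h, (Finset.univ.filter fun u => P φ u).card := by
          simp only [Finset.card_filter]
          exact Finset.sum_comm
  -- case split on n < h
  by_cases hnh : h ≤ n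
  · have hpow : (h : ℝ) ^ h * (h : ℝ) ^ (n - h) = (h : ℝ) ^ n := by
      rw [← pow_add, Nat.add_sub_cancel' hnh]
    have hhpos : (0:ℝ) < (h:ℝ) := by
      have := NeZero.pos h
      exact_mod_cast this
    rw [div_le_div_iff₀ (by positivity) (by positivity)]
    have hsum : (x * h ^ (n - h) : ℝ) ≤
        ∑ φ : V → ZMod h, ((Finset.univ.filter fun u => P φ u).card : ℝ) := by
      rw [← Nat.cast_sum]
      exact_mod_cast hmain
    calc (x:ℝ) * (h:ℝ) ^ n = (x * h ^ (n-h) : ℝ) * (h:ℝ)^h := by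
          rw [← hpow]; ring
      _ ≤ (∑ φ : V → ZMod h, ((Finset.univ.filter fun u => P φ u).card : ℝ)) * (h:ℝ)^h := by
          apply mul_le_mul_of_nonneg_right hsum (by positivity)
      _ = (∑ φ : V → ZMod h,
            (Nat.card {u : V // P φ u} : ℝ)) * (h:ℝ)^h := by
          congr 1
          apply Finset.sum_congr rfl
          intro φ _
          rw [Nat.card_eq_fintype_card, Fintype.card_subtype]
  · -- n < h: x = 0
    push_neg at hnh
    have hx0 : x = 0 := by
      rw [hxcard, Finset.card_eq_zero, Finset.filter_eq_empty_iff]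
      rintro u _ ⟨w, hinj, -, -⟩
      have := Fintype.card_le_of_injective w hinj
      rw [ZMod.card] at this
      omega
    rw [hx0]
    simp only [Nat.cast_zero, zero_div]
    apply div_nonneg
    · apply Finset.sum_nonneg
      intro φ _
      positivity
    · positivity
end

section
/- Let G be a finite simple undirected graph with n vertices, let h ≥ 3, suppose G contains at least one h-cycle, and let x = |V_{C_h}(G)|. Let φ : V → ℤ/hℤ be a uniformly random coloring, fix a color c, let V_c = φ^{-1}(c), and let U be a p-random subset of V_c (each vertex of V_c kept independently with probability p), sampled independently of φ. Let H be the subgraph of G_φ induced on U ∪ (V ∖ V_c). If p ≥ 4h^h/x and p ≤ 1, then the probability that H contains a directed h-cycle is at least 1/(4h^h). -/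
set_option maxHeartbeats 1000000
open scoped Classical

section Aux
variable {V : Type*} [Fintype V] [DecidableEq V]

lemma sum_prod_bool' (g : V → Bool → ℝ) :
    ∑ f : V → Bool, ∏ v, g v (f v) = ∏ v, ∑ b : Bool, g v b := by
  rw [Finset.prod_univ_sum, Fintype.piFinset_univ]

lemma sum_prod_zmod' (h : ℕ) [NeZero h] (g : V → ZMod h → ℝ) :
    ∑ φ : V → ZMod h, ∏ v, g v (φ v) = ∏ v, ∑ a : ZMod h, g v a := by
  rw [Finset.prod_univ_sum, Fintype.piFinset_univ]

omit [Fintype V] [DecidableEq V] in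
lemma cycle_color' {h : ℕ} [NeZero h] (φ : V → ZMod h) (w : ZMod h → V)
    (hw : ∀ i, φ (w (i+1)) = φ (w i) + 1) (i j : ZMod h) :
    φ (w (i + j)) = φ (w i) + j := by
  have key : ∀ (m : ℕ), φ (w (i + (m : ZMod h))) = φ (w i) + (m : ZMod h) := by
    intro m; induction m with
    | zero => simp
    | succ k ih =>
      have h1 : ((((k:ℕ)+1 : ℕ)) : ZMod h) = ((k : ℕ) : ZMod h) + 1 := by push_cast; ring
      rw [h1, ← add_assoc, hw, ih]; ring
  have := key j.val
  rwa [ZMod.natCast_zmod_val] at this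

end Aux

/-- Let `G` be a finite simple undirected graph containing at least one
`h`-cycle (`h ≥ 3`) and let `x = |V_{C_h}(G)|`. Sample a uniformly random coloring
`φ : V → ZMod h` and, independently, keep each vertex with probability `p` (encoded by a
Bernoulli(`p`) family `f : V → Bool`); let `U` be the kept vertices of `V_c = φ⁻¹(c)` and
`H` the subgraph of `G_φ` induced on `U ∪ (V ∖ V_c)` (a vertex `v` survives iff
`φ v = c → f v`). If `4h^h/x ≤ p ≤ 1`, then the probability that `H` contains a directed
`h`-cycle is at least `1/(4h^h)`. The probability is written out explicitly: average over
all colorings `φ`, and the Bernoulli product weight `∏_v (if f v then p else 1−p)`. -/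
theorem stmt_11 {V : Type*} [Fintype V] [DecidableEq V]
    (G : SimpleGraph V) (h : ℕ) [NeZero h] (hh : 3 ≤ h) (c : ZMod h) (x : ℕ) (p : ℝ)
    (hcyc : ∃ w : ZMod h → V, Function.Injective w ∧
      ∀ i : ZMod h, G.Adj (w i) (w (i + 1)))
    (hx : x = Nat.card {u : V // ∃ w : ZMod h → V, Function.Injective w ∧
        (∀ i : ZMod h, G.Adj (w i) (w (i + 1))) ∧ ∃ i, w i = u})
    (hp : 4 * (h : ℝ) ^ h / (x : ℝ) ≤ p) (hp1 : p ≤ 1) :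
    (1 : ℝ) / (4 * (h : ℝ) ^ h) ≤
      (∑ φ : V → ZMod h, ∑ f : V → Bool,
        (∏ v : V, if f v then p else 1 - p) *
          (if ∃ w : ZMod h → V, Function.Injective w ∧
              (∀ i : ZMod h, G.Adj (w i) (w (i + 1)) ∧ φ (w (i + 1)) = φ (w i) + 1) ∧
              (∀ i : ZMod h, φ (w i) = c → f (w i) = true)
            then (1 : ℝ) else 0)) / (h : ℝ) ^ (Fintype.card V) := by
  classical
  obtain ⟨n, hn⟩ : ∃ n, Fintype.card V = n := ⟨_, rfl⟩
  rw [hn]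
  set VC : Finset V := Finset.univ.filter (fun u => ∃ w : ZMod h → V, Function.Injective w ∧
      (∀ i : ZMod h, G.Adj (w i) (w (i + 1))) ∧ ∃ i, w i = u) with hVC
  set S : (V → ZMod h) → Finset V := fun φ => Finset.univ.filter (fun u => φ u = c ∧
      ∃ w : ZMod h → V, Function.Injective w ∧
      (∀ i : ZMod h, G.Adj (w i) (w (i + 1)) ∧ φ (w (i+1)) = φ (w i) + 1) ∧ ∃ i, w i = u) with hS
  have hxcard : x = VC.card := by
    rw [hx, Nat.card_eq_fintype_card, Fintype.card_subtype]
  have hhpos : (0:ℝ) < (h:ℝ) := by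
    have : 0 < h := lt_of_lt_of_le (by norm_num) hh
    exact_mod_cast this
  have hhh : (0:ℝ) < (h:ℝ)^h := by positivity
  have hx0 : 0 < x := by
    obtain ⟨w, hwi, hwa⟩ := hcyc
    have : w 0 ∈ VC := by
      simp only [hVC, Finset.mem_filter, Finset.mem_univ, true_and]
      exact ⟨w, hwi, hwa, 0, rfl⟩
    rw [hxcard]
    exact Finset.card_pos.mpr ⟨w 0, this⟩
  have hxR : (0:ℝ) < (x:ℝ) := by exact_mod_cast hx0
  have hp0 : 0 ≤ p := le_trans (by positivity) hp
  have h1p : 0 ≤ 1 - p := by linarith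
  have hnh : h ≤ n := by
    obtain ⟨w, hwi, _⟩ := hcyc
    have := Fintype.card_le_of_injective w hwi
    rwa [ZMod.card, hn] at this
  have hSsub : ∀ φ, S φ ⊆ VC := by
    intro φ u hu
    simp only [hS, Finset.mem_filter, Finset.mem_univ, true_and] at hu
    obtain ⟨-, w, hwi, hwa, i, hi⟩ := hu
    simp only [hVC, Finset.mem_filter, Finset.mem_univ, true_and]
    exact ⟨w, hwi, fun j => (hwa j).1, i, hi⟩
  have hSx : ∀ φ, (S φ).card ≤ x := by
    intro φ; rw [hxcard]; exact Finset.card_le_card (hSsub φ)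
  -- Claim C : expected size of S
  have claimC : (x : ℝ) * (h:ℝ)^(n - h) ≤ ∑ φ : V → ZMod h, ((S φ).card : ℝ) := by
    have step1 : ∀ φ : V → ZMod h, ((S φ).card : ℝ) =
        ∑ u ∈ VC, (if u ∈ S φ then (1:ℝ) else 0) := by
      intro φ
      have heq : VC.filter (fun u => u ∈ S φ) = S φ := by
        rw [Finset.filter_mem_eq_inter, Finset.inter_eq_right.mpr (hSsub φ)]
      rw [Finset.sum_boole, heq]
    calc (x : ℝ) * (h:ℝ)^(n - h) = ∑ u ∈ VC, (h:ℝ)^(n-h) := by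
            rw [Finset.sum_const, hxcard]; ring
      _ ≤ ∑ u ∈ VC, ∑ φ : V → ZMod h, (if u ∈ S φ then (1:ℝ) else 0) := by
            apply Finset.sum_le_sum
            intro u hu
            simp only [hVC, Finset.mem_filter, Finset.mem_univ, true_and] at hu
            obtain ⟨w, hwi, hwa, i₀, hi₀⟩ := hu
            -- target coloring on the cycle
            set tgt : V → ZMod h := fun v => c + (Function.invFun w v - i₀) with htgt
            have htw : ∀ i : ZMod h, tgt (w i) = c + (i - i₀) := by
              intro i
              have : Function.invFun w (w i) = i :=
                Function.leftInverse_invFun hwi i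
              simp [htgt, this]
            set R : Finset V := Finset.univ.image w with hR
            have hRcard : R.card = h := by
              rw [hR, Finset.card_image_of_injective _ hwi, Finset.card_univ, ZMod.card]
            have key : ∑ φ : V → ZMod h,
                (if ∀ v ∈ R, φ v = tgt v then (1:ℝ) else 0) = (h:ℝ)^(n-h) := by
              have hrw : ∀ φ : V → ZMod h, (if ∀ v ∈ R, φ v = tgt v then (1:ℝ) else 0) =
                  ∏ v : V, (if v ∈ R then (if φ v = tgt v then (1:ℝ) else 0) else 1) := by
                intro φ
                by_cases hc : ∀ v ∈ R, φ v = tgt v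
                · rw [if_pos hc]
                  symm
                  apply Finset.prod_eq_one
                  intro v _
                  by_cases hv : v ∈ R
                  · rw [if_pos hv, if_pos (hc v hv)]
                  · rw [if_neg hv]
                · rw [if_neg hc]
                  push_neg at hc
                  obtain ⟨v, hv, hfv⟩ := hc
                  symm
                  apply Finset.prod_eq_zero (Finset.mem_univ v)
                  rw [if_pos hv, if_neg hfv]
              calc ∑ φ : V → ZMod h, (if ∀ v ∈ R, φ v = tgt v then (1:ℝ) else 0)
                  = ∑ φ : V → ZMod h, ∏ v : V,
                      (if v ∈ R then (if φ v = tgt v then (1:ℝ) else 0) else 1) := by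
                    exact Finset.sum_congr rfl (fun φ _ => hrw φ)
                _ = ∏ v : V, ∑ a : ZMod h,
                      (if v ∈ R then (if a = tgt v then (1:ℝ) else 0) else 1) :=
                    sum_prod_zmod' h (fun v a => if v ∈ R then (if a = tgt v then (1:ℝ) else 0) else 1)
                _ = ∏ v : V, (if v ∈ R then (1:ℝ) else (h:ℝ)) := by
                    apply Finset.prod_congr rfl
                    intro v _
                    by_cases hv : v ∈ R
                    · simp [hv]
                    · simp [hv, ZMod.card]
                _ = (h:ℝ)^(n-h) := by
                    rw [Finset.prod_ite, Finset.prod_const, Finset.prod_const, one_pow, one_mul]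
                    congr 1
                    rw [Finset.filter_not, Finset.filter_mem_eq_inter, Finset.univ_inter,
                      Finset.card_sdiff_of_subset (Finset.subset_univ R), Finset.card_univ, hRcard, hn]
            rw [← key]
            apply Finset.sum_le_sum
            intro φ _
            by_cases hc : ∀ v ∈ R, φ v = tgt v
            · rw [if_pos hc, if_pos]
              simp only [hS, Finset.mem_filter, Finset.mem_univ, true_and]
              have hcol : ∀ i : ZMod h, φ (w i) = c + (i - i₀) := by
                intro i
                have : w i ∈ R := by simp [hR]
                rw [hc _ this, htw]
              constructor
              · rw [← hi₀, hcol i₀]; simp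
              · refine ⟨w, hwi, fun i => ⟨hwa i, ?_⟩, i₀, hi₀⟩
                rw [hcol i, hcol (i+1)]; ring
            · rw [if_neg hc]
              split <;> norm_num
      _ = ∑ φ : V → ZMod h, ((S φ).card : ℝ) := by
            rw [Finset.sum_comm]
            exact Finset.sum_congr rfl (fun φ _ => (step1 φ).symm)
  -- inner sum lower bound
  have claimInner : ∀ φ : V → ZMod h,
      (1:ℝ) - (1-p)^((S φ).card) ≤ ∑ f : V → Bool,
        (∏ v : V, if f v then p else 1 - p) *
          (if ∃ w : ZMod h → V, Function.Injective w ∧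
              (∀ i : ZMod h, G.Adj (w i) (w (i + 1)) ∧ φ (w (i + 1)) = φ (w i) + 1) ∧
              (∀ i : ZMod h, φ (w i) = c → f (w i) = true)
            then (1 : ℝ) else 0) := by
    intro φ
    have claimA : ∀ f : V → Bool, (∃ u ∈ S φ, f u = true) →
        (∃ w : ZMod h → V, Function.Injective w ∧
          (∀ i : ZMod h, G.Adj (w i) (w (i + 1)) ∧ φ (w (i + 1)) = φ (w i) + 1) ∧
          (∀ i : ZMod h, φ (w i) = c → f (w i) = true)) := by
      intro f ⟨u, hu, hfu⟩
      simp only [hS, Finset.mem_filter, Finset.mem_univ, true_and] at hu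
      obtain ⟨huc, w, hwi, hwa, i₀, hi₀⟩ := hu
      refine ⟨w, hwi, hwa, fun i hi => ?_⟩
      have hcc : φ (w i) = φ (w i₀) + (i - i₀) := by
        have := cycle_color' φ w (fun j => (hwa j).2) i₀ (i - i₀)
        rwa [add_sub_cancel] at this
      rw [hi₀, huc] at hcc
      rw [hi] at hcc
      have : i - i₀ = 0 := by linear_combination -hcc
      have hii : i = i₀ := by
        have := sub_eq_zero.mp this; exact this
      rw [hii, hi₀, hfu]
    -- sum of weights is 1
    have wsum : ∑ f : V → Bool, (∏ v : V, if f v then p else 1 - p) = 1 := by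
      rw [sum_prod_bool' (fun v b => if b then p else 1 - p)]
      apply Finset.prod_eq_one
      intro v _
      simp [Fintype.sum_bool]
    -- weight of "no survivor in S φ"
    have wfail : ∑ f : V → Bool, (∏ v : V, if f v then p else 1 - p) *
        (if ∀ u ∈ S φ, f u = false then (1:ℝ) else 0) = (1-p)^((S φ).card) := by
      have hrw : ∀ f : V → Bool, (∏ v : V, if f v then p else 1 - p) *
          (if ∀ u ∈ S φ, f u = false then (1:ℝ) else 0) =
          ∏ v : V, ((if f v then p else 1 - p) *
            (if v ∈ S φ then (if f v then 0 else 1) else 1)) := by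
        intro f
        rw [Finset.prod_mul_distrib]
        congr 1
        by_cases hc : ∀ u ∈ S φ, f u = false
        · rw [if_pos hc]
          symm
          apply Finset.prod_eq_one
          intro v _
          by_cases hv : v ∈ S φ
          · rw [if_pos hv, if_neg (by simp [hc v hv])]
          · rw [if_neg hv]
        · rw [if_neg hc]
          push_neg at hc
          obtain ⟨v, hv, hfv⟩ := hc
          symm
          apply Finset.prod_eq_zero (Finset.mem_univ v)
          rw [if_pos hv, if_pos (by simpa using hfv)]
      calc ∑ f : V → Bool, (∏ v : V, if f v then p else 1 - p) *
            (if ∀ u ∈ S φ, f u = false then (1:ℝ) else 0)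
          = ∑ f : V → Bool, ∏ v : V, ((if f v then p else 1 - p) *
              (if v ∈ S φ then (if f v then 0 else 1) else 1)) :=
            Finset.sum_congr rfl (fun f _ => hrw f)
        _ = ∏ v : V, ∑ b : Bool, ((if b then p else 1 - p) *
              (if v ∈ S φ then (if b then 0 else 1) else 1)) :=
            sum_prod_bool' (fun v b => (if b then p else 1 - p) *
              (if v ∈ S φ then (if b then 0 else 1) else 1))
        _ = ∏ v : V, (if v ∈ S φ then (1-p) else 1) := by
            apply Finset.prod_congr rfl
            intro v _
            by_cases hv : v ∈ S φ
            · simp [hv, Fintype.sum_bool]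
            · simp [hv, Fintype.sum_bool]
        _ = (1-p)^((S φ).card) := by
            rw [Finset.prod_ite, Finset.prod_const, Finset.prod_const, one_pow, mul_one]
            congr 1
            rw [Finset.filter_mem_eq_inter, Finset.univ_inter]
    have step : ∀ f : V → Bool,
        (∏ v : V, if f v then p else 1 - p) * (if ∃ u ∈ S φ, f u = true then (1:ℝ) else 0)
        ≤ (∏ v : V, if f v then p else 1 - p) *
          (if ∃ w : ZMod h → V, Function.Injective w ∧
              (∀ i : ZMod h, G.Adj (w i) (w (i + 1)) ∧ φ (w (i + 1)) = φ (w i) + 1) ∧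
              (∀ i : ZMod h, φ (w i) = c → f (w i) = true)
            then (1 : ℝ) else 0) := by
      intro f
      apply mul_le_mul_of_nonneg_left _ (by positivity)
      by_cases hc : ∃ u ∈ S φ, f u = true
      · rw [if_pos hc, if_pos (claimA f hc)]
      · rw [if_neg hc]; split <;> norm_num
    calc (1:ℝ) - (1-p)^((S φ).card)
        = ∑ f : V → Bool, (∏ v : V, if f v then p else 1 - p) *
            (if ∃ u ∈ S φ, f u = true then (1:ℝ) else 0) := by
          have hsplit : ∀ f : V → Bool,
              (∏ v : V, if f v then p else 1 - p) *
                (if ∃ u ∈ S φ, f u = true then (1:ℝ) else 0) =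
              (∏ v : V, if f v then p else 1 - p) -
              (∏ v : V, if f v then p else 1 - p) *
                (if ∀ u ∈ S φ, f u = false then (1:ℝ) else 0) := by
            intro f
            by_cases hc : ∃ u ∈ S φ, f u = true
            · have hne : ¬ ∀ u ∈ S φ, f u = false := by
                push_neg
                obtain ⟨u, hu, hfu⟩ := hc
                exact ⟨u, hu, by simp [hfu]⟩
              rw [if_pos hc, if_neg hne]
              ring
            · have hal : ∀ u ∈ S φ, f u = false := by
                push_neg at hc
                intro u hu
                simpa using hc u hu
              rw [if_neg hc, if_pos hal]
              ring
          rw [Finset.sum_congr rfl (fun f _ => hsplit f), Finset.sum_sub_distrib, wsum, wfail]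
      _ ≤ _ := Finset.sum_le_sum (fun f _ => step f)
  -- nonnegativity of inner sum
  have innerNonneg : ∀ φ : V → ZMod h, (0:ℝ) ≤ ∑ f : V → Bool,
      (∏ v : V, if f v then p else 1 - p) *
        (if ∃ w : ZMod h → V, Function.Injective w ∧
            (∀ i : ZMod h, G.Adj (w i) (w (i + 1)) ∧ φ (w (i + 1)) = φ (w i) + 1) ∧
            (∀ i : ZMod h, φ (w i) = c → f (w i) = true)
          then (1 : ℝ) else 0) := by
    intro φ
    apply Finset.sum_nonneg
    intro f _
    apply mul_nonneg (by positivity)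
    split <;> norm_num
  -- the good set of colorings
  set T : Finset (V → ZMod h) := Finset.univ.filter
    (fun φ => (x:ℝ)/(2*(h:ℝ)^h) ≤ ((S φ).card : ℝ)) with hT
  have claimHalf : ∀ φ ∈ T, (1-p)^((S φ).card) ≤ 1/2 := by
    intro φ hφ
    simp only [hT, Finset.mem_filter, Finset.mem_univ, true_and] at hφ
    set k := (S φ).card
    have hpk : 2 ≤ p * k := by
      have h1 : (x:ℝ)/(2*(h:ℝ)^h) * (4 * (h:ℝ)^h / (x:ℝ)) = 2 := by
        field_simp; ring
      calc (2:ℝ) = (x:ℝ)/(2*(h:ℝ)^h) * (4 * (h:ℝ)^h / (x:ℝ)) := h1.symm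
        _ ≤ (k:ℝ) * p := by
            apply mul_le_mul hφ hp (by positivity)
            positivity
        _ = p * k := mul_comm _ _
    calc (1-p)^k ≤ (Real.exp (-p))^k := by
          apply pow_le_pow_left₀ h1p
          linarith [Real.add_one_le_exp (-p)]
      _ = Real.exp ((k:ℝ) * (-p)) := by rw [← Real.exp_nat_mul]
      _ ≤ Real.exp (-2) := by
          apply Real.exp_le_exp.mpr
          nlinarith
      _ ≤ 1/2 := by
          rw [Real.exp_neg]
          have h2 : (3:ℝ) ≤ Real.exp 2 := by
            linarith [Real.add_one_le_exp (2:ℝ)]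
          rw [inv_le_comm₀ (by linarith) (by norm_num)]
          linarith
  -- size of T
  have claimT : (h:ℝ)^n / (2*(h:ℝ)^h) ≤ (T.card : ℝ) := by
    have hcardfun : (Fintype.card (V → ZMod h) : ℝ) = (h:ℝ)^n := by
      rw [Fintype.card_fun, ZMod.card, hn]
      push_cast; ring
    have upper : ∑ φ : V → ZMod h, ((S φ).card : ℝ) ≤
        (T.card : ℝ) * x + (h:ℝ)^n * ((x:ℝ)/(2*(h:ℝ)^h)) := by
      rw [← Finset.sum_filter_add_sum_filter_not Finset.univ
        (fun φ => (x:ℝ)/(2*(h:ℝ)^h) ≤ ((S φ).card : ℝ))]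
      apply add_le_add
      · calc ∑ φ ∈ T, ((S φ).card : ℝ) ≤ ∑ φ ∈ T, (x:ℝ) := by
              apply Finset.sum_le_sum
              intro φ _
              exact_mod_cast hSx φ
          _ = (T.card : ℝ) * x := by rw [Finset.sum_const]; ring
      · calc ∑ φ ∈ Finset.univ.filter (fun φ => ¬ ((x:ℝ)/(2*(h:ℝ)^h) ≤ ((S φ).card : ℝ))),
              ((S φ).card : ℝ)
            ≤ ∑ φ ∈ Finset.univ.filter (fun φ => ¬ ((x:ℝ)/(2*(h:ℝ)^h) ≤ ((S φ).card : ℝ))),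
              ((x:ℝ)/(2*(h:ℝ)^h)) := by
              apply Finset.sum_le_sum
              intro φ hφ
              simp only [Finset.mem_filter, Finset.mem_univ, true_and, not_le] at hφ
              linarith
          _ ≤ (h:ℝ)^n * ((x:ℝ)/(2*(h:ℝ)^h)) := by
              rw [Finset.sum_const, nsmul_eq_mul]
              apply mul_le_mul_of_nonneg_right _ (by positivity)
              calc ((Finset.univ.filter _).card : ℝ) ≤ (Finset.univ.card : ℝ) := by
                    exact_mod_cast Finset.card_le_card (Finset.filter_subset _ _)
                _ = (h:ℝ)^n := by rw [Finset.card_univ]; exact hcardfun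
    have hpow : (h:ℝ)^(n-h) = (h:ℝ)^n / (h:ℝ)^h := by
      rw [eq_div_iff (ne_of_gt hhh), ← pow_add]
      congr 1
      exact Nat.sub_add_cancel hnh
    have key : (x:ℝ) * ((h:ℝ)^n / (2*(h:ℝ)^h)) ≤ (T.card : ℝ) * x := by
      have hle := le_trans claimC upper
      rw [hpow] at hle
      have e1 : (x:ℝ) * ((h:ℝ)^n / (h:ℝ)^h) = 2 * ((x:ℝ) * ((h:ℝ)^n / (2*(h:ℝ)^h))) := by
        field_simp
      have e2 : (h:ℝ)^n * ((x:ℝ)/(2*(h:ℝ)^h)) = (x:ℝ) * ((h:ℝ)^n / (2*(h:ℝ)^h)) := by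
        ring
      rw [e1, e2] at hle
      linarith
    calc (h:ℝ)^n / (2*(h:ℝ)^h) = (x:ℝ) * ((h:ℝ)^n / (2*(h:ℝ)^h)) / x := by
          field_simp
      _ ≤ (T.card : ℝ) * x / x := by
          gcongr
      _ = (T.card : ℝ) := by field_simp
  have lower : (h:ℝ)^n / (4*(h:ℝ)^h) ≤ ∑ φ : V → ZMod h, (∑ f : V → Bool,
        (∏ v : V, if f v then p else 1 - p) *
          (if ∃ w : ZMod h → V, Function.Injective w ∧
              (∀ i : ZMod h, G.Adj (w i) (w (i + 1)) ∧ φ (w (i + 1)) = φ (w i) + 1) ∧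
              (∀ i : ZMod h, φ (w i) = c → f (w i) = true)
            then (1 : ℝ) else 0)) := by
    calc (h:ℝ)^n / (4*(h:ℝ)^h) = ((h:ℝ)^n / (2*(h:ℝ)^h)) * (1/2) := by ring
      _ ≤ (T.card : ℝ) * (1/2) := mul_le_mul_of_nonneg_right claimT (by norm_num)
      _ = ∑ φ ∈ T, (1/2 : ℝ) := by rw [Finset.sum_const]; ring
      _ ≤ ∑ φ ∈ T, (∑ f : V → Bool,
        (∏ v : V, if f v then p else 1 - p) *
          (if ∃ w : ZMod h → V, Function.Injective w ∧
              (∀ i : ZMod h, G.Adj (w i) (w (i + 1)) ∧ φ (w (i + 1)) = φ (w i) + 1) ∧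
              (∀ i : ZMod h, φ (w i) = c → f (w i) = true)
            then (1 : ℝ) else 0)) := by
          apply Finset.sum_le_sum
          intro φ hφ
          have h1 := claimHalf φ hφ
          have h2 := claimInner φ
          linarith
      _ ≤ ∑ φ : V → ZMod h, (∑ f : V → Bool,
        (∏ v : V, if f v then p else 1 - p) *
          (if ∃ w : ZMod h → V, Function.Injective w ∧
              (∀ i : ZMod h, G.Adj (w i) (w (i + 1)) ∧ φ (w (i + 1)) = φ (w i) + 1) ∧
              (∀ i : ZMod h, φ (w i) = c → f (w i) = true)
            then (1 : ℝ) else 0)) :=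
          Finset.sum_le_sum_of_subset_of_nonneg (Finset.subset_univ T)
            (fun φ _ _ => innerNonneg φ)
  rw [div_le_div_iff₀ (by positivity) (by positivity)]
  have hmul := mul_le_mul_of_nonneg_right lower (by positivity : (0:ℝ) ≤ 4*(h:ℝ)^h)
  have he : (h:ℝ)^n / (4*(h:ℝ)^h) * (4*(h:ℝ)^h) = (h:ℝ)^n := by field_simp
  rw [he] at hmul
  linarith
end

section
/- Let G be a finite simple undirected graph, let h ≥ 3, let t be the number of h-cycles of G, and let x = |V_{C_h}(G)|. For each integer i with h+1 ≤ i ≤ 2h−1, let D^i denote the number of ordered pairs of distinct h-cycles of G whose vertex sets have union of size exactly i (equivalently, which share exactly 2h−i vertices). Then D^i ≤ (2h)^h · t · x^{i−h}. -/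
/-- An `h`-cycle of a simple graph `G`, viewed as a set of vertices: a finset `s` admitting
a cyclic ordering `w : ℤ/hℤ → V` of its (distinct) elements with consecutive vertices
adjacent. -/
def IsCycleSet {V : Type*} [Fintype V] [DecidableEq V] (G : SimpleGraph V) (h : ℕ)
    [NeZero h] (s : Finset V) : Prop :=
  ∃ w : ZMod h → V, Function.Injective w ∧
    (∀ i : ZMod h, G.Adj (w i) (w (i + 1))) ∧ Finset.image w Finset.univ = s

private lemma cycleSet_card {V : Type*} [Fintype V] [DecidableEq V] (G : SimpleGraph V)
    (h : ℕ) [NeZero h] {s : Finset V} (hs : IsCycleSet G h s) : s.card = h := by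
  obtain ⟨w, hw, -, hwi⟩ := hs
  rw [← hwi, Finset.card_image_of_injective _ hw, Finset.card_univ, ZMod.card]

private lemma image_equivFin_cast {V : Type*} [DecidableEq V] (s : Finset V) (k : ℕ)
    (hc : s.card = k) :
    Finset.image (fun j : Fin k => (s.equivFin.symm (Fin.cast hc.symm j) : V))
      Finset.univ = s := by
  ext v
  simp only [Finset.mem_image, Finset.mem_univ, true_and]
  constructor
  · rintro ⟨j, rfl⟩; exact (s.equivFin.symm (Fin.cast hc.symm j)).2
  · intro hv
    exact ⟨Fin.cast hc (s.equivFin ⟨v, hv⟩), by simp⟩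

/-- Let `G` be a finite simple undirected graph, `h ≥ 3`, `t` the number
of `h`-cycles of `G` and `x = |V_{C_h}(G)|`. For `h+1 ≤ i ≤ 2h−1`, the number `D^i` of
ordered pairs of distinct `h`-cycles whose vertex sets have union of size exactly `i`
satisfies `D^i ≤ (2h)^h · t · x^{i−h}`. -/
theorem stmt_12 {V : Type*} [Fintype V] [DecidableEq V]
    (G : SimpleGraph V) (h : ℕ) [NeZero h] (hh : 3 ≤ h) (t x : ℕ)
    (ht : t = Nat.card {s : Finset V // IsCycleSet G h s})
    (hx : x = Nat.card {u : V // ∃ w : ZMod h → V, Function.Injective w ∧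
        (∀ i : ZMod h, G.Adj (w i) (w (i + 1))) ∧ ∃ i, w i = u})
    (i : ℕ) (hi1 : h + 1 ≤ i) (hi2 : i ≤ 2 * h - 1) :
    Nat.card {cc : Finset V × Finset V //
        IsCycleSet G h cc.1 ∧ IsCycleSet G h cc.2 ∧ cc.1 ≠ cc.2 ∧
        (cc.1 ∪ cc.2).card = i}
      ≤ (2 * h) ^ h * t * x ^ (i - h) := by
  classical
  set k := i - h with hk
  set Vch := {u : V // ∃ w : ZMod h → V, Function.Injective w ∧
      (∀ i : ZMod h, G.Adj (w i) (w (i + 1))) ∧ ∃ i, w i = u} with hVch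
  set P := {cc : Finset V × Finset V //
      IsCycleSet G h cc.1 ∧ IsCycleSet G h cc.2 ∧ cc.1 ≠ cc.2 ∧
      (cc.1 ∪ cc.2).card = i} with hP
  -- key cardinality facts about a pair
  have card1 : ∀ p : P, (p.1.1).card = h := fun p => cycleSet_card G h p.2.1
  have card2 : ∀ p : P, (p.1.2 \ p.1.1).card = k := by
    intro p
    obtain ⟨⟨C1, C2⟩, h1, h2, hne, hu⟩ := p
    show (C2 \ C1).card = k
    have hc1 : C1.card = h := cycleSet_card G h h1
    have h5 : (C2 \ C1).card + C1.card = (C2 ∪ C1).card :=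
      Finset.card_sdiff_add_card C2 C1
    have hu' : (C1 ∪ C2).card = i := hu
    rw [Finset.union_comm] at hu'
    omega
  have memVch : ∀ p : P, ∀ v ∈ p.1.2, (∃ w : ZMod h → V, Function.Injective w ∧
      (∀ i : ZMod h, G.Adj (w i) (w (i + 1))) ∧ ∃ i, w i = v) := by
    intro p v hv
    obtain ⟨w, hw1, hw2, hw3⟩ := p.2.2.1
    refine ⟨w, hw1, hw2, ?_⟩
    rw [← hw3] at hv
    simpa using hv
  -- the injection
  let F : P → {s : Finset V // IsCycleSet G h s} × Finset (Fin h) × (Fin k → Vch) :=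
    fun p =>
      ⟨⟨p.1.1, p.2.1⟩,
       Finset.univ.filter (fun j : Fin h =>
         ((p.1.1.equivFin.symm (Fin.cast (card1 p).symm j)) : V) ∈ p.1.2),
       fun j => ⟨((p.1.2 \ p.1.1).equivFin.symm (Fin.cast (card2 p).symm j) : V),
         memVch p _ (Finset.mem_sdiff.mp
           ((p.1.2 \ p.1.1).equivFin.symm (Fin.cast (card2 p).symm j)).2).1⟩⟩
  have hFinj : Function.Injective F := by
    rintro ⟨⟨A1, A2⟩, hA⟩ ⟨⟨B1, B2⟩, hB⟩ hab
    have h1 : A1 = B1 := congrArg (fun q => q.1.1) hab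
    subst h1
    have cA1 : A1.card = h := cycleSet_card G h hA.1
    have h2 : Finset.univ.filter (fun j : Fin h =>
        ((A1.equivFin.symm (Fin.cast cA1.symm j)) : V) ∈ A2)
        = Finset.univ.filter (fun j : Fin h =>
        ((A1.equivFin.symm (Fin.cast cA1.symm j)) : V) ∈ B2) :=
      congrArg (fun q => q.2.1) hab
    have h3 := congrArg (fun q => q.2.2) hab
    have key : ∀ v, v ∈ A1 → (v ∈ A2 ↔ v ∈ B2) := by
      intro v hv1
      set j : Fin h := Fin.cast cA1 (A1.equivFin ⟨v, hv1⟩) with hjdef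
      have hj : ((A1.equivFin.symm (Fin.cast cA1.symm j)) : V) = v := by
        simp [hjdef]
      have hmem := Finset.ext_iff.mp h2 j
      simp only [Finset.mem_filter, Finset.mem_univ, true_and] at hmem
      rw [hj] at hmem
      exact hmem
    have hinter : A2 ∩ A1 = B2 ∩ A1 := by
      ext v
      simp only [Finset.mem_inter]
      constructor
      · rintro ⟨hv2, hv1⟩; exact ⟨(key v hv1).mp hv2, hv1⟩
      · rintro ⟨hv2, hv1⟩; exact ⟨(key v hv1).mpr hv2, hv1⟩
    have hsdiff : A2 \ A1 = B2 \ A1 := by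
      have cA : (A2 \ A1).card = k := by
        have h5 : (A2 \ A1).card + A1.card = (A2 ∪ A1).card :=
          Finset.card_sdiff_add_card A2 A1
        have hu : (A1 ∪ A2).card = i := hA.2.2.2
        rw [Finset.union_comm] at hu
        omega
      have cB : (B2 \ A1).card = k := by
        have h5 : (B2 \ A1).card + A1.card = (B2 ∪ A1).card :=
          Finset.card_sdiff_add_card B2 A1
        have hu : (A1 ∪ B2).card = i := hB.2.2.2
        rw [Finset.union_comm] at hu
        omega
      have himA := image_equivFin_cast (A2 \ A1) k cA
      have himB := image_equivFin_cast (B2 \ A1) k cB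
      rw [← himA, ← himB]
      apply Finset.image_congr
      intro j _
      exact congrArg Subtype.val (congrFun h3 j)
    have hA2B2 : A2 = B2 := by
      have e1 : A2 = (A2 \ A1) ∪ (A2 ∩ A1) := (Finset.sdiff_union_inter A2 A1).symm
      have e2 : B2 = (B2 \ A1) ∪ (B2 ∩ A1) := (Finset.sdiff_union_inter B2 A1).symm
      rw [e1, e2, hsdiff, hinter]
    subst hA2B2
    rfl
  have hfin : Finite ({s : Finset V // IsCycleSet G h s} × Finset (Fin h) × (Fin k → Vch)) := by
    infer_instance
  have hcard := Nat.card_le_card_of_injective F hFinj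
  have hcards : Nat.card ({s : Finset V // IsCycleSet G h s} × Finset (Fin h) × (Fin k → Vch))
      = t * (2 ^ h * x ^ k) := by
    rw [Nat.card_prod, Nat.card_prod, Nat.card_fun, ht, hx]
    congr 2
    · simp [Nat.card_eq_fintype_card]
    · simp [Nat.card_eq_fintype_card]
  rw [hcards] at hcard
  refine hcard.trans ?_
  have h2h : 2 ^ h ≤ (2 * h) ^ h := Nat.pow_le_pow_left (by omega) h
  calc t * (2 ^ h * x ^ k) = 2 ^ h * t * x ^ k := by ring
    _ ≤ (2 * h) ^ h * t * x ^ k := by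
        exact Nat.mul_le_mul_right _ (Nat.mul_le_mul_right _ h2h)
end

section
/- Let G be a finite simple undirected graph, let h ≥ 3, let t ≥ 1 be the number of h-cycles of G, and let x = |V_{C_h}(G)|. Let U be a p-random subset of V with 1/x ≤ p ≤ 1. Then the probability that the induced subgraph G[U] contains an h-cycle is at least (2ht/x^h) · 1/(4h)^{h+2}. (In the paper's notation, writing x^{h−δ} = 2ht, this probability is at least 1/(x^δ · (4h)^{h+2}).) -/
open scoped Classical

open Finset
set_option linter.unusedSectionVars false
set_option maxHeartbeats 1000000

section Aux
variable {V : Type*} [Fintype V] [DecidableEq V]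

lemma sum_wgt (r : ℝ) (A : Finset V) :
    ∑ u ∈ A.powerset, r ^ u.card * (1 - r) ^ (A.card - u.card) = 1 := by
  induction A using Finset.induction with
  | empty => simp
  | insert _ _ hv _ =>
    rename_i v A ih
    rw [Finset.sum_powerset_insert hv]
    have h1 : ∀ u ∈ A.powerset, r ^ u.card * (1 - r) ^ ((insert v A).card - u.card)
        = (1 - r) * (r ^ u.card * (1 - r) ^ (A.card - u.card)) := by
      intro u hu
      rw [Finset.mem_powerset] at hu
      have : u.card ≤ A.card := Finset.card_le_card hu
      rw [Finset.card_insert_of_notMem hv]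
      rw [show A.card + 1 - u.card = (A.card - u.card) + 1 by omega]
      ring
    have h2 : ∀ u ∈ A.powerset, r ^ (insert v u).card * (1 - r) ^ ((insert v A).card - (insert v u).card)
        = r * (r ^ u.card * (1 - r) ^ (A.card - u.card)) := by
      intro u hu
      rw [Finset.mem_powerset] at hu
      have hvu : v ∉ u := fun hm => hv (hu hm)
      rw [Finset.card_insert_of_notMem hv, Finset.card_insert_of_notMem hvu]
      rw [show A.card + 1 - (u.card + 1) = A.card - u.card by omega]
      ring
    rw [Finset.sum_congr rfl h1, Finset.sum_congr rfl h2, ← Finset.mul_sum, ← Finset.mul_sum, ih]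
    ring

lemma sum_wgt_superset (r : ℝ) (A c : Finset V) (hc : c ⊆ A) :
    ∑ u ∈ A.powerset, (if c ⊆ u then r ^ u.card * (1 - r) ^ (A.card - u.card) else 0)
      = r ^ c.card := by
  rw [Finset.sum_ite, Finset.sum_const_zero, add_zero]
  have key : ∑ u ∈ A.powerset.filter (fun u => c ⊆ u), r ^ u.card * (1 - r) ^ (A.card - u.card)
      = ∑ v ∈ (A \ c).powerset, r ^ c.card * (r ^ v.card * (1 - r) ^ ((A \ c).card - v.card)) := by
    refine Finset.sum_nbij' (fun u => u \ c) (fun v => v ∪ c) ?_ ?_ ?_ ?_ ?_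
    · intro u hu
      simp only [Finset.mem_filter, Finset.mem_powerset] at hu
      exact Finset.mem_powerset.2 (Finset.sdiff_subset_sdiff hu.1 le_rfl)
    · intro v hv
      simp only [Finset.mem_powerset] at hv
      simp only [Finset.mem_filter, Finset.mem_powerset]
      exact ⟨Finset.union_subset (hv.trans Finset.sdiff_subset) hc, Finset.subset_union_right⟩
    · intro u hu
      simp only [Finset.mem_filter, Finset.mem_powerset] at hu
      exact Finset.sdiff_union_of_subset hu.2
    · intro v hv
      simp only [Finset.mem_powerset] at hv
      have hd : Disjoint v c := Finset.disjoint_of_subset_left hv (Finset.sdiff_disjoint)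
      rw [Finset.union_sdiff_right, Finset.sdiff_eq_self_of_disjoint hd]
    · intro u hu
      simp only [Finset.mem_filter, Finset.mem_powerset] at hu
      have h1 : (u \ c).card + c.card = u.card := Finset.card_sdiff_add_card_eq_card hu.2
      have h2 : (A \ c).card + c.card = A.card := Finset.card_sdiff_add_card_eq_card hc
      have h3 : u.card ≤ A.card := Finset.card_le_card hu.1
      rw [← h1, show (A.card - ((u\c).card + c.card)) = (A\c).card - (u\c).card by omega]
      ring
  rw [key, ← Finset.mul_sum, sum_wgt r (A \ c), mul_one]

noncomputable def fP (r : ℝ) (A : Finset V) (F : Finset V → Prop) : ℝ :=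
  ∑ u ∈ A.powerset, r ^ u.card * (1 - r) ^ (A.card - u.card) * (if F u then 1 else 0)

lemma fP_mono_family (r : ℝ) (hr0 : 0 ≤ r) (hr1 : r ≤ 1) (A : Finset V)
    (F F' : Finset V → Prop) (hFF' : ∀ u, F u → F' u) :
    fP r A F ≤ fP r A F' := by
  refine Finset.sum_le_sum fun u _ => ?_
  have hw : 0 ≤ r ^ u.card * (1 - r) ^ (A.card - u.card) :=
    mul_nonneg (pow_nonneg hr0 _) (pow_nonneg (by linarith) _)
  by_cases hF : F u
  · rw [if_pos hF, if_pos (hFF' u hF)]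
  · rw [if_neg hF, mul_zero]
    positivity
lemma fP_mono_p (q p : ℝ) (h0 : 0 ≤ q) (hqp : q ≤ p) (hp1 : p ≤ 1) (A : Finset V)
    (F : Finset V → Prop) (hF : ∀ u v, u ⊆ v → F u → F v) :
    fP q A F ≤ fP p A F := by
  induction A using Finset.induction generalizing F with
  | empty => simp [fP]
  | insert _ _ hv _ =>
    rename_i v A ih
    have hp0 : 0 ≤ p := le_trans h0 hqp
    have hq1 : q ≤ 1 := le_trans hqp hp1
    have split : ∀ r : ℝ, fP r (insert v A) F
        = (1 - r) * fP r A F + r * fP r A (fun u => F (insert v u)) := by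
      intro r
      unfold fP
      rw [Finset.sum_powerset_insert hv, Finset.mul_sum, Finset.mul_sum]
      congr 1
      · refine Finset.sum_congr rfl fun u hu => ?_
        rw [Finset.mem_powerset] at hu
        have : u.card ≤ A.card := Finset.card_le_card hu
        rw [Finset.card_insert_of_notMem hv,
          show A.card + 1 - u.card = (A.card - u.card) + 1 by omega]
        ring
      · refine Finset.sum_congr rfl fun u hu => ?_
        rw [Finset.mem_powerset] at hu
        have hvu : v ∉ u := fun hm => hv (hu hm)
        rw [Finset.card_insert_of_notMem hv, Finset.card_insert_of_notMem hvu,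
          show A.card + 1 - (u.card + 1) = A.card - u.card by omega]
        ring
    rw [split q, split p]
    have hF' : ∀ u w, u ⊆ w → F (insert v u) → F (insert v w) :=
      fun u w huw => hF _ _ (Finset.insert_subset_insert v huw)
    have i1 : fP q A F ≤ fP p A F := ih F hF
    have i2 : fP q A (fun u => F (insert v u)) ≤ fP p A (fun u => F (insert v u)) := ih _ hF'
    have i3 : fP p A F ≤ fP p A (fun u => F (insert v u)) :=
      fP_mono_family p hp0 hp1 A _ _ (fun u => hF u (insert v u) (Finset.subset_insert v u))
    nlinarith [i1, i2, i3]

lemma bonf_aux (n : ℕ) : (n : ℝ) - ((n * n - n : ℕ) : ℝ) / 2 ≤ 1 := by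
  have hle : n ≤ n * n := by nlinarith [Nat.zero_le n]
  rw [Nat.cast_sub hle]
  push_cast
  rcases Nat.lt_or_ge n 2 with h | h
  · interval_cases n <;> norm_num
  · have : (2:ℝ) ≤ n := by exact_mod_cast h
    nlinarith

lemma bonferroni (μ : Finset V → ℝ) (hμ : ∀ u, 0 ≤ μ u) (C : Finset (Finset V)) :
    (∑ c ∈ C, ∑ u ∈ (univ : Finset V).powerset, (if c ⊆ u then μ u else 0))
      - (1/2) * ∑ pp ∈ C.offDiag, ∑ u ∈ (univ : Finset V).powerset,
          (if pp.1 ∪ pp.2 ⊆ u then μ u else 0)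
      ≤ ∑ u ∈ (univ : Finset V).powerset, μ u * (if ∃ c ∈ C, c ⊆ u then (1:ℝ) else 0) := by
  rw [Finset.sum_comm (s := C), Finset.sum_comm (s := C.offDiag), Finset.mul_sum,
    ← Finset.sum_sub_distrib]
  refine Finset.sum_le_sum fun u _ => ?_
  have h1 : ∑ c ∈ C, (if c ⊆ u then μ u else 0)
      = ((C.filter (fun c => c ⊆ u)).card : ℝ) * μ u := by
    rw [← Finset.sum_filter, Finset.sum_const, nsmul_eq_mul]
  have hset : C.offDiag.filter (fun pp => pp.1 ⊆ u ∧ pp.2 ⊆ u)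
      = (C.filter (fun c => c ⊆ u)).offDiag := by
    ext pp
    simp only [Finset.mem_filter, Finset.mem_offDiag]
    tauto
  have h2 : ∑ pp ∈ C.offDiag, (if pp.1 ∪ pp.2 ⊆ u then μ u else 0)
      = (((C.filter (fun c => c ⊆ u)).card * (C.filter (fun c => c ⊆ u)).card
          - (C.filter (fun c => c ⊆ u)).card : ℕ) : ℝ) * μ u := by
    have : ∀ pp : Finset V × Finset V, (pp.1 ∪ pp.2 ⊆ u) ↔ (pp.1 ⊆ u ∧ pp.2 ⊆ u) :=
      fun pp => Finset.union_subset_iff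
    simp_rw [this]
    rw [← Finset.sum_filter, hset, Finset.sum_const, nsmul_eq_mul, Finset.offDiag_card]
  rw [h1, h2]
  set n := (C.filter (fun c => c ⊆ u)).card with hn
  by_cases hex : ∃ c ∈ C, c ⊆ u
  · rw [if_pos hex]
    have := bonf_aux n
    have h0 := hμ u
    nlinarith
  · have hn0 : n = 0 := by
      rw [hn, Finset.card_eq_zero, Finset.filter_eq_empty_iff]
      intro c hc hcu
      exact hex ⟨c, hc, hcu⟩
    rw [if_neg hex, hn0]
    simp

lemma geo_sum (h : ℕ) : ∑ j ∈ Finset.Icc 1 h, (1/4 : ℝ) ^ j ≤ 1/3 := by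
  have key : ∀ m : ℕ, ∑ j ∈ Finset.Icc 1 m, (1/4 : ℝ) ^ j = (1 - (1/4)^m)/3 := by
    intro m
    induction m with
    | zero => simp
    | succ n ih =>
      rw [show Finset.Icc 1 (n+1) = insert (n+1) (Finset.Icc 1 n) by
        ext a; simp [Finset.mem_Icc]; omega]
      rw [Finset.sum_insert (by simp [Finset.mem_Icc]), ih]
      ring
  rw [key h]
  have : (0:ℝ) ≤ (1/4)^h := by positivity
  linarith

lemma pair_bound (q : ℝ) (hq0 : 0 ≤ q) (h x : ℕ) (hh : 1 ≤ h)
    (Vc : Finset V) (hVc : Vc.card = x)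
    (C : Finset (Finset V)) (hcard : ∀ c' ∈ C, c'.card = h) (hsub : ∀ c' ∈ C, c' ⊆ Vc)
    (hq : (h : ℝ) * x * q ≤ 1/4) (c : Finset V) (hc : c ∈ C) :
    ∑ c' ∈ C.filter (fun c' => c' ≠ c), q ^ (c ∪ c').card ≤ q ^ h / 3 := by
  set D := C.filter (fun c' => c' ≠ c) with hD
  set S := (c.powerset ×ˢ Vc.powerset).filter
      (fun y : Finset V × Finset V => y.1.card + y.2.card = h ∧ 1 ≤ y.2.card) with hS
  have hinj : ∀ a ∈ D, ∀ b ∈ D, (a ∩ c, a \ c) = (b ∩ c, b \ c) → a = b := by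
    intro a _ b _ hab
    have h1 : a ∩ c = b ∩ c := congrArg Prod.fst hab
    have h2 : a \ c = b \ c := congrArg Prod.snd hab
    have ha : a ∩ c ∪ a \ c = a := by
      ext z; simp only [Finset.mem_union, Finset.mem_inter, Finset.mem_sdiff]; tauto
    have hb : b ∩ c ∪ b \ c = b := by
      ext z; simp only [Finset.mem_union, Finset.mem_inter, Finset.mem_sdiff]; tauto
    rw [← ha, ← hb, h1, h2]
  -- steps 1&2: rewrite each term and pass to image
  have step12 : ∑ c' ∈ D, q ^ (c ∪ c').card
      = ∑ y ∈ D.image (fun c' => (c' ∩ c, c' \ c)), q ^ (h + y.2.card) := by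
    rw [Finset.sum_image hinj]
    refine Finset.sum_congr rfl fun c' hc' => ?_
    show q ^ (c ∪ c').card = q ^ (h + (c' \ c).card)
    have h1 : (c' \ c).card + c.card = (c' ∪ c).card := Finset.card_sdiff_add_card c' c
    have h2 : c ∪ c' = c' ∪ c := Finset.union_comm c c'
    have hch : c.card = h := hcard c hc
    rw [h2]
    congr 1
    omega
  -- step 3: image ⊆ S
  have himg : D.image (fun c' => (c' ∩ c, c' \ c)) ⊆ S := by
    intro y hy
    rw [Finset.mem_image] at hy
    obtain ⟨c', hc', rfl⟩ := hy
    rw [hD, Finset.mem_filter] at hc'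
    obtain ⟨hc'C, hne⟩ := hc'
    rw [hS, Finset.mem_filter]
    refine ⟨Finset.mem_product.2 ⟨Finset.mem_powerset.2 Finset.inter_subset_right,
      Finset.mem_powerset.2 ((Finset.sdiff_subset).trans (hsub c' hc'C))⟩, ?_, ?_⟩
    · exact Finset.card_inter_add_card_sdiff c' c ▸ (hcard c' hc'C) ▸ rfl
    · by_contra hlt
      push_neg at hlt
      interval_cases hcd : (c' \ c).card
      have : c' \ c = ∅ := Finset.card_eq_zero.1 hcd
      have hsubc : c' ⊆ c := Finset.sdiff_eq_empty_iff_subset.1 this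
      have : c' = c := Finset.eq_of_subset_of_card_le hsubc
        (le_of_eq ((hcard c hc).trans (hcard c' hc'C).symm))
      exact hne this
  have step3 : ∑ y ∈ D.image (fun c' => (c' ∩ c, c' \ c)), q ^ (h + y.2.card)
      ≤ ∑ y ∈ S, q ^ (h + y.2.card) :=
    Finset.sum_le_sum_of_subset_of_nonneg himg (fun y _ _ => by positivity)
  -- step 4: fiber over second card
  have hmaps : ∀ y ∈ S, y.2.card ∈ Finset.Icc 1 h := by
    intro y hy
    rw [hS, Finset.mem_filter] at hy
    rw [Finset.mem_Icc]
    exact ⟨hy.2.2, by omega⟩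
  have step4 : ∑ y ∈ S, q ^ (h + y.2.card)
      = ∑ j ∈ Finset.Icc 1 h, ∑ y ∈ S.filter (fun y => y.2.card = j), q ^ (h + y.2.card) :=
    (Finset.sum_fiberwise_of_maps_to hmaps _).symm
  -- step 5: bound each fiber
  have step5 : ∀ j ∈ Finset.Icc 1 h,
      ∑ y ∈ S.filter (fun y => y.2.card = j), q ^ (h + y.2.card) ≤ (1/4)^j * q^h := by
    intro j hj
    rw [Finset.mem_Icc] at hj
    have hconst : ∑ y ∈ S.filter (fun y => y.2.card = j), q ^ (h + y.2.card)
        = ((S.filter (fun y => y.2.card = j)).card : ℝ) * q ^ (h + j) := by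
      calc ∑ y ∈ S.filter (fun y => y.2.card = j), q ^ (h + y.2.card)
          = ∑ _y ∈ S.filter (fun y => y.2.card = j), q ^ (h + j) :=
            Finset.sum_congr rfl (fun y hy => by rw [(Finset.mem_filter.1 hy).2])
        _ = ((S.filter (fun y => y.2.card = j)).card : ℝ) * q ^ (h + j) := by
            rw [Finset.sum_const, nsmul_eq_mul]
    rw [hconst]
    have hsub2 : S.filter (fun y => y.2.card = j)
        ⊆ (c.powersetCard (h - j)) ×ˢ (Vc.powersetCard j) := by
      intro y hy
      simp only [Finset.mem_filter, hS, Finset.mem_product, Finset.mem_powerset] at hy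
      obtain ⟨⟨⟨hy1, hy2⟩, hsum, _⟩, hcardj⟩ := hy
      rw [Finset.mem_product, Finset.mem_powersetCard, Finset.mem_powersetCard]
      exact ⟨⟨hy1, by omega⟩, ⟨hy2, hcardj⟩⟩
    have hcardle : (S.filter (fun y => y.2.card = j)).card
        ≤ (h.choose (h - j)) * (x.choose j) := by
      calc (S.filter (fun y => y.2.card = j)).card
          ≤ ((c.powersetCard (h - j)) ×ˢ (Vc.powersetCard j)).card :=
            Finset.card_le_card hsub2
        _ = (h.choose (h - j)) * (x.choose j) := by
            rw [Finset.card_product, Finset.card_powersetCard, Finset.card_powersetCard,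
              hcard c hc, hVc]
    have hch : (h.choose (h - j) : ℝ) ≤ (h : ℝ) ^ j := by
      rw [Nat.choose_symm hj.2]
      exact_mod_cast Nat.choose_le_pow h j
    have hcx : (x.choose j : ℝ) ≤ (x : ℝ) ^ j := by exact_mod_cast Nat.choose_le_pow x j
    have hqh : (0:ℝ) ≤ q ^ h := by positivity
    have hqj : (0:ℝ) ≤ q ^ j := by positivity
    calc ((S.filter (fun y => y.2.card = j)).card : ℝ) * q ^ (h + j)
        ≤ ((h.choose (h - j)) * (x.choose j) : ℝ) * q ^ (h + j) := by
          apply mul_le_mul_of_nonneg_right _ (by positivity)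
          exact_mod_cast hcardle
      _ = ((h.choose (h - j)) : ℝ) * ((x.choose j) : ℝ) * (q^j * q^h) := by
          rw [pow_add]; ring
      _ ≤ (h:ℝ)^j * (x:ℝ)^j * (q^j * q^h) := by
          apply mul_le_mul_of_nonneg_right _ (by positivity)
          exact mul_le_mul hch hcx (by positivity) (by positivity)
      _ = ((h:ℝ) * x * q)^j * q^h := by rw [mul_pow, mul_pow]; ring
      _ ≤ (1/4)^j * q^h := by
          apply mul_le_mul_of_nonneg_right _ hqh
          exact pow_le_pow_left₀ (by positivity) hq j
  -- combine
  calc ∑ c' ∈ D, q ^ (c ∪ c').card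
      = ∑ y ∈ D.image (fun c' => (c' ∩ c, c' \ c)), q ^ (h + y.2.card) := step12
    _ ≤ ∑ y ∈ S, q ^ (h + y.2.card) := step3
    _ = ∑ j ∈ Finset.Icc 1 h, ∑ y ∈ S.filter (fun y => y.2.card = j), q ^ (h + y.2.card) := step4
    _ ≤ ∑ j ∈ Finset.Icc 1 h, (1/4:ℝ)^j * q^h := Finset.sum_le_sum step5
    _ = (∑ j ∈ Finset.Icc 1 h, (1/4:ℝ)^j) * q^h := by rw [Finset.sum_mul]
    _ ≤ (1/3) * q^h := by
        apply mul_le_mul_of_nonneg_right (geo_sum h) (by positivity)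
    _ = q^h / 3 := by ring

end Aux

/-- Let `G` be a finite simple undirected graph, `h ≥ 3`, `t ≥ 1` the
number of `h`-cycles of `G`, and `x = |V_{C_h}(G)|`. For a `p`-random subset `U` of `V`
with `1/x ≤ p ≤ 1`, the probability that the induced subgraph `G[U]` contains an `h`-cycle
is at least `(2ht/x^h) · 1/(4h)^{h+2}` (i.e. `1/(x^δ (4h)^{h+2})` where `x^{h−δ} = 2ht`). -/
theorem stmt_15 {V : Type*} [Fintype V] [DecidableEq V]
    (G : SimpleGraph V) (h : ℕ) [NeZero h] (hh : 3 ≤ h) (t x : ℕ)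
    (ht : t = Nat.card {s : Finset V // IsCycleSet G h s}) (ht1 : 1 ≤ t)
    (hx : x = Nat.card {u : V // ∃ w : ZMod h → V, Function.Injective w ∧
        (∀ i : ZMod h, G.Adj (w i) (w (i + 1))) ∧ ∃ i, w i = u})
    (p : ℝ) (hp : 1 / (x : ℝ) ≤ p) (hp1 : p ≤ 1) :
    (2 * (h : ℝ) * (t : ℝ) / (x : ℝ) ^ h) * (1 / (4 * (h : ℝ)) ^ (h + 2)) ≤
      ∑ s : Finset V, p ^ s.card * (1 - p) ^ (Fintype.card V - s.card) *
        (if ∃ c : Finset V, IsCycleSet G h c ∧ c ⊆ s then (1 : ℝ) else 0) := by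
  classical
  set F : Finset V → Prop := fun s => ∃ c : Finset V, IsCycleSet G h c ∧ c ⊆ s with hF
  set Cset : Finset (Finset V) := Finset.univ.filter (fun c => IsCycleSet G h c) with hCset
  set Vc : Finset V := Finset.univ.filter (fun u => ∃ w : ZMod h → V, Function.Injective w ∧
      (∀ i : ZMod h, G.Adj (w i) (w (i + 1))) ∧ ∃ i, w i = u) with hVc
  have htC : t = Cset.card := by
    rw [ht, Nat.card_eq_fintype_card, Fintype.card_subtype]
  have hxV : x = Vc.card := by
    rw [hx, Nat.card_eq_fintype_card, Fintype.card_subtype]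
  have hcard : ∀ c ∈ Cset, c.card = h := by
    intro c hc
    rw [hCset, Finset.mem_filter] at hc
    obtain ⟨-, w, hw, -, himg⟩ := hc
    rw [← himg, Finset.card_image_of_injective _ hw, Finset.card_univ, ZMod.card]
  have hsubV : ∀ c ∈ Cset, c ⊆ Vc := by
    intro c hc u hu
    rw [hCset, Finset.mem_filter] at hc
    obtain ⟨-, w, hw, hadj, himg⟩ := hc
    rw [← himg, Finset.mem_image] at hu
    obtain ⟨i, -, rfl⟩ := hu
    rw [hVc, Finset.mem_filter]
    exact ⟨Finset.mem_univ _, w, hw, hadj, i, rfl⟩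
  have hCne : Cset.Nonempty := Finset.card_pos.1 (htC ▸ ht1)
  obtain ⟨c0, hc0⟩ := hCne
  have hhx : h ≤ x := by
    rw [hxV, ← hcard c0 hc0]; exact Finset.card_le_card (hsubV c0 hc0)
  have hhpos : 0 < h := Nat.pos_of_ne_zero (NeZero.ne h)
  have hxpos : 0 < x := Nat.lt_of_lt_of_le hhpos hhx
  have hhR : (0:ℝ) < (h:ℝ) := by exact_mod_cast hhpos
  have hxR : (0:ℝ) < (x:ℝ) := by exact_mod_cast hxpos
  have hh3 : (3:ℝ) ≤ (h:ℝ) := by exact_mod_cast hh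
  have hx1 : (1:ℝ) ≤ (x:ℝ) := by exact_mod_cast hxpos
  set q : ℝ := 1 / (4 * (h:ℝ) * (x:ℝ)) with hqdef
  have hq0 : 0 ≤ q := by rw [hqdef]; positivity
  have hq1 : q ≤ 1 := by
    rw [hqdef, div_le_one (by positivity)]
    nlinarith [hh3, hx1]
  have hqp : q ≤ p := by
    refine le_trans ?_ hp
    rw [hqdef]
    apply div_le_div_of_nonneg_left (by norm_num) hxR
    nlinarith [hh3, hx1]
  have hhxq : (h:ℝ) * (x:ℝ) * q = 1/4 := by
    rw [hqdef]
    field_simp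
  have hFmono : ∀ u v : Finset V, u ⊆ v → F u → F v := by
    rintro u v huv ⟨c, hc1, hc2⟩; exact ⟨c, hc1, hc2.trans huv⟩
  have hgoal : fP p Finset.univ F = ∑ s : Finset V,
      p ^ s.card * (1 - p) ^ (Fintype.card V - s.card) * (if F s then (1:ℝ) else 0) := by
    unfold fP
    rw [Finset.powerset_univ, Finset.card_univ]
    refine Finset.sum_congr rfl fun u _ => ?_
    by_cases hFu : F u
    · rw [if_pos hFu, if_pos hFu]
    · rw [if_neg hFu, if_neg hFu]
  have hmono : fP q Finset.univ F ≤ fP p Finset.univ F :=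
    fP_mono_p q p hq0 hqp hp1 Finset.univ F hFmono
  set μ : Finset V → ℝ :=
    fun u => q ^ u.card * (1 - q) ^ ((Finset.univ : Finset V).card - u.card) with hμdef
  have hμ0 : ∀ u, 0 ≤ μ u :=
    fun u => mul_nonneg (pow_nonneg hq0 _) (pow_nonneg (by linarith) _)
  have hbon := bonferroni μ hμ0 Cset
  have hident : ∑ u ∈ (Finset.univ : Finset V).powerset,
      μ u * (if ∃ c ∈ Cset, c ⊆ u then (1:ℝ) else 0) = fP q Finset.univ F := by
    unfold fP
    refine Finset.sum_congr rfl fun u _ => ?_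
    have hiff : (∃ c ∈ Cset, c ⊆ u) ↔ F u := by
      constructor
      · rintro ⟨c, hcC, hcu⟩
        exact ⟨c, (Finset.mem_filter.1 hcC).2, hcu⟩
      · rintro ⟨c, hc1, hc2⟩
        exact ⟨c, Finset.mem_filter.2 ⟨Finset.mem_univ _, hc1⟩, hc2⟩
    rw [if_congr hiff rfl rfl]
    simp only [hμdef]
    ring
  have hterm1 : ∑ c ∈ Cset, ∑ u ∈ (Finset.univ : Finset V).powerset,
      (if c ⊆ u then μ u else 0) = (t:ℝ) * q ^ h := by
    have e : ∀ c ∈ Cset, ∑ u ∈ (Finset.univ : Finset V).powerset,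
        (if c ⊆ u then μ u else 0) = q ^ h := by
      intro c hc
      rw [← hcard c hc]
      exact sum_wgt_superset q Finset.univ c (Finset.subset_univ c)
    rw [Finset.sum_congr rfl e, Finset.sum_const, nsmul_eq_mul, htC]
  have hterm2 : ∑ pp ∈ Cset.offDiag, ∑ u ∈ (Finset.univ : Finset V).powerset,
      (if pp.1 ∪ pp.2 ⊆ u then μ u else 0) ≤ (t:ℝ) * (q ^ h / 3) := by
    have e1 : ∀ pp ∈ Cset.offDiag, ∑ u ∈ (Finset.univ : Finset V).powerset,
        (if pp.1 ∪ pp.2 ⊆ u then μ u else 0) = q ^ (pp.1 ∪ pp.2).card :=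
      fun pp _ => sum_wgt_superset q Finset.univ _ (Finset.subset_univ _)
    rw [Finset.sum_congr rfl e1]
    have hmaps : ∀ pp ∈ Cset.offDiag, pp.1 ∈ Cset :=
      fun pp hpp => (Finset.mem_offDiag.1 hpp).1
    rw [← Finset.sum_fiberwise_of_maps_to hmaps (fun pp => q ^ (pp.1 ∪ pp.2).card)]
    have inner_le : ∀ c ∈ Cset, ∑ pp ∈ Cset.offDiag.filter (fun pp => pp.1 = c),
        q ^ (pp.1 ∪ pp.2).card ≤ q ^ h / 3 := by
      intro c hc
      have ebij : ∑ pp ∈ Cset.offDiag.filter (fun pp => pp.1 = c), q ^ (pp.1 ∪ pp.2).card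
          = ∑ c' ∈ Cset.filter (fun c' => c' ≠ c), q ^ (c ∪ c').card := by
        refine Finset.sum_nbij' (fun pp => pp.2) (fun c' => (c, c')) ?_ ?_ ?_ ?_ ?_
        · intro pp hpp
          simp only [Finset.mem_filter, Finset.mem_offDiag] at hpp ⊢
          obtain ⟨⟨h1, h2, h3⟩, h4⟩ := hpp
          refine ⟨h2, ?_⟩
          rw [← h4]
          exact fun e => h3 e.symm
        · intro c' hc'
          simp only [Finset.mem_filter, Finset.mem_offDiag] at hc' ⊢
          exact ⟨⟨hc, hc'.1, fun e => hc'.2 e.symm⟩, trivial⟩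
        · intro pp hpp
          simp only [Finset.mem_filter] at hpp
          exact Prod.ext hpp.2.symm rfl
        · intro c' _
          rfl
        · intro pp hpp
          simp only [Finset.mem_filter] at hpp
          rw [hpp.2]
      rw [ebij]
      exact pair_bound q hq0 h x (le_trans (by norm_num) hh) Vc hxV.symm Cset hcard hsubV
        (le_of_eq hhxq) c hc
    calc ∑ c ∈ Cset, ∑ pp ∈ Cset.offDiag.filter (fun pp => pp.1 = c),
          q ^ (pp.1 ∪ pp.2).card
        ≤ ∑ _c ∈ Cset, q ^ h / 3 := Finset.sum_le_sum inner_le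
      _ = (t:ℝ) * (q ^ h / 3) := by rw [Finset.sum_const, nsmul_eq_mul, htC]
  have hlow : (5/6 : ℝ) * ((t:ℝ) * q ^ h) ≤ fP q Finset.univ F := by
    rw [hident, hterm1] at hbon
    nlinarith [hterm2]
  have hqpow : q ^ h = 1 / ((4*(h:ℝ))^h * (x:ℝ)^h) := by
    rw [hqdef, one_div, one_div, ← mul_pow, inv_pow]
  have harith : 2*(h:ℝ)*(t:ℝ)/(x:ℝ)^h * (1/(4*(h:ℝ))^(h+2))
      ≤ (5/6 : ℝ) * ((t:ℝ) * q ^ h) := by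
    rw [hqpow, pow_add]
    have h1 : (0:ℝ) < (4*(h:ℝ))^h := by positivity
    have h2 : (0:ℝ) < (x:ℝ)^h := by positivity
    have h3 : (0:ℝ) ≤ (t:ℝ) := Nat.cast_nonneg t
    have hT : (0:ℝ) ≤ (t:ℝ) * ((4*(h:ℝ))^h * (x:ℝ)^h) :=
      mul_nonneg h3 (mul_nonneg h1.le h2.le)
    have hcert : (0:ℝ) ≤ ((t:ℝ) * ((4*(h:ℝ))^h * (x:ℝ)^h)) * (80*(h:ℝ)^2 - 12*(h:ℝ)) := by
      apply mul_nonneg hT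
      nlinarith [hh3]
    field_simp
    nlinarith [hcert]
  rw [← hgoal]
  calc 2*(h:ℝ)*(t:ℝ)/(x:ℝ)^h * (1/(4*(h:ℝ))^(h+2))
      ≤ (5/6 : ℝ) * ((t:ℝ) * q ^ h) := harith
    _ ≤ fP q Finset.univ F := hlow
    _ ≤ fP p Finset.univ F := hmono
end

section
/- Let G be a finite simple undirected graph, let h ≥ 3, let t ≥ 1 be the number of h-cycles of G, and let x = |V_{C_h}(G)|. Let φ : V → ℤ/hℤ be a uniformly random coloring, and independently let U₁,…,U_r be independent p-random subsets of V, where 1/x ≤ p ≤ 1 and r ≥ 8·(4h)^{h+2}·x^h/(2ht) (i.e., r ≥ 8·(4h)^{h+2}·x^δ in the notation x^{h−δ} = 2ht). Then with probability at least 1/(2h^h) there exists an index i ∈ [r] such that the directed graph (G[U_i])_φ contains a directed h-cycle. -/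
open scoped Classical

section
variable {V : Type*} [Fintype V] [DecidableEq V] (h : ℕ) [NeZero h]

lemma col_iff (w : ZMod h → V) (φ : V → ZMod h) :
    (∀ j : ZMod h, φ (w (j + 1)) = φ (w j) + 1) ↔ (∀ j : ZMod h, φ (w j) = φ (w 0) + j) := by
  constructor
  · intro H j
    have key : ∀ m : ℕ, φ (w (m : ZMod h)) = φ (w 0) + (m : ZMod h) := by
      intro m
      induction m with
      | zero => simp
      | succ k ih => push_cast; rw [H (k : ZMod h), ih]; ring
    have := key j.val
    rwa [ZMod.natCast_val, ZMod.cast_id] at this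
  · intro H j
    rw [H (j+1), H j]; ring

lemma count_ext (s : Finset V) (g : V → ZMod h) :
    (Finset.univ.filter fun φ : V → ZMod h => ∀ v ∈ s, φ v = g v).card
      = h ^ (Fintype.card V - s.card) := by
  have e : {φ : V → ZMod h // ∀ v ∈ s, φ v = g v} ≃ ((sᶜ : Finset V) → ZMod h) :=
    { toFun := fun φ v => φ.1 v.1
      invFun := fun f => ⟨fun v => if hv : v ∈ s then g v else f ⟨v, by simpa using hv⟩,
        fun v hv => by simp [hv]⟩
      left_inv := by
        intro ⟨φ, hφ⟩
        ext v
        by_cases hv : v ∈ s <;> simp [hv, hφ v]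
      right_inv := by
        intro f
        ext v
        have : (v : V) ∉ s := by
          have h2 := Finset.coe_mem v
          rw [Finset.mem_compl] at h2
          exact h2
        simp [this] }
  have := Fintype.card_congr e
  rw [Fintype.card_subtype] at this
  rw [this, Fintype.card_fun, ZMod.card, Fintype.card_coe, Finset.card_compl]

lemma count_col (w : ZMod h → V) (hw : Function.Injective w) :
    (Finset.univ.filter fun φ : V → ZMod h => ∀ j : ZMod h, φ (w (j + 1)) = φ (w j) + 1).card
      = h * h ^ (Fintype.card V - h) := by
  have hrw : (Finset.univ.filter fun φ : V → ZMod h => ∀ j : ZMod h, φ (w (j+1)) = φ (w j) + 1)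
      = (Finset.univ.filter fun φ : V → ZMod h => ∀ j : ZMod h, φ (w j) = φ (w 0) + j) := by
    apply Finset.filter_congr
    intro φ _
    simpa using col_iff h w φ
  rw [hrw]
  rw [Finset.card_eq_sum_card_fiberwise (f := fun φ : V → ZMod h => φ (w 0)) (t := Finset.univ)
    (fun _ _ => Finset.mem_univ _)]
  have key : ∀ c : ZMod h,
      ((Finset.univ.filter fun φ : V → ZMod h => ∀ j : ZMod h, φ (w j) = φ (w 0) + j).filter
        (fun φ => φ (w 0) = c)).card = h ^ (Fintype.card V - h) := by
    intro c
    have heq : ((Finset.univ.filter fun φ : V → ZMod h => ∀ j : ZMod h, φ (w j) = φ (w 0) + j).filter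
        (fun φ => φ (w 0) = c))
        = Finset.univ.filter (fun φ : V → ZMod h =>
            ∀ v ∈ Finset.image w Finset.univ, φ v = c + Function.invFun w v) := by
      ext φ
      simp only [Finset.mem_filter, Finset.mem_univ, true_and, Finset.mem_image]
      constructor
      · rintro ⟨H, hc⟩ v ⟨j, rfl⟩
        rw [Function.leftInverse_invFun hw j, H j, hc]
      · intro H
        have h0 : φ (w 0) = c := by
          have := H (w 0) ⟨0, rfl⟩
          rwa [Function.leftInverse_invFun hw 0, add_zero] at this
        refine ⟨fun j => ?_, h0⟩
        have := H (w j) ⟨j, rfl⟩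
        rw [Function.leftInverse_invFun hw j] at this
        rw [this, h0]
    rw [heq, count_ext, Finset.card_image_of_injective _ hw]
    simp [ZMod.card]
  simp only [key]
  simp [ZMod.card, mul_comm]
end


lemma ite_one_zero_mul (P Q : Prop) :
    (if P then (1:ℝ) else 0) * (if Q then (1:ℝ) else 0) = if P ∧ Q then 1 else 0 := by
  by_cases hP : P <;> by_cases hQ : Q <;> simp [hP, hQ]

section
variable {V : Type*} [Fintype V] [DecidableEq V]

lemma sum_bernoulli_pi (r : ℕ) (c : Fin r → V → Bool → ℝ) :
    ∑ F : Fin r → V → Bool, ∏ i, ∏ v, c i v (F i v)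
      = ∏ i, ∏ v, (c i v true + c i v false) := by
  have h1 : ∀ i : Fin r, ∑ f : V → Bool, ∏ v, c i v (f v)
      = ∏ v, (c i v true + c i v false) := by
    intro i
    have hs := (Finset.prod_univ_sum (fun _ : V => (Finset.univ : Finset Bool))
      (fun v b => c i v b)).symm
    rw [Fintype.piFinset_univ] at hs
    exact hs.trans (Finset.prod_congr rfl fun v _ => by rw [Fintype.sum_bool])
  have houter := (Finset.prod_univ_sum (fun _ : Fin r => (Finset.univ : Finset (V → Bool)))
    (fun i g => ∏ v, c i v (g v))).symm
  rw [Fintype.piFinset_univ] at houter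
  exact houter.trans (Finset.prod_congr rfl fun i _ => h1 i)

lemma measure_A (r : ℕ) (p : ℝ) (A : Fin r → Finset V) :
    ∑ F : Fin r → V → Bool, (∏ i, ∏ v, if F i v then p else 1 - p) *
      (if ∀ i : Fin r, ∀ v ∈ A i, F i v = true then (1:ℝ) else 0)
      = ∏ i, p ^ (A i).card := by
  have step1 : ∀ F : Fin r → V → Bool,
      (∏ i, ∏ v, if F i v then p else 1 - p) *
        (if ∀ i : Fin r, ∀ v ∈ A i, F i v = true then (1:ℝ) else 0)
      = ∏ i, ∏ v, (fun (i : Fin r) (v : V) (b : Bool) =>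
          if v ∈ A i then (if b then p else 0) else (if b then p else 1 - p)) i v (F i v) := by
    intro F
    by_cases hF : ∀ i : Fin r, ∀ v ∈ A i, F i v = true
    · rw [if_pos hF, mul_one]
      refine Finset.prod_congr rfl fun i _ => Finset.prod_congr rfl fun v _ => ?_
      by_cases hv : v ∈ A i
      · simp [hv, hF i v hv]
      · simp [hv]
    · rw [if_neg hF, mul_zero]
      push_neg at hF
      obtain ⟨i, v, hv, hFiv⟩ := hF
      rw [eq_comm]
      apply Finset.prod_eq_zero (Finset.mem_univ i)
      apply Finset.prod_eq_zero (Finset.mem_univ v)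
      simp only [if_pos hv, Bool.not_eq_true] at *
      rw [hFiv]
      simp
  rw [Finset.sum_congr rfl fun F _ => step1 F,
    sum_bernoulli_pi r (fun (i : Fin r) (v : V) (b : Bool) =>
      if v ∈ A i then (if b then p else 0) else (if b then p else 1 - p))]
  refine Finset.prod_congr rfl fun i _ => ?_
  refine Eq.trans (Finset.prod_congr rfl fun v _ =>
    show _ = (if v ∈ A i then p else 1) from by by_cases hv : v ∈ A i <;> simp [hv]) ?_
  rw [Finset.prod_ite_mem, Finset.univ_inter, Finset.prod_const]

lemma pair_measure (r : ℕ) (p : ℝ) (i i' : Fin r) (s s' : Finset V) :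
    ∑ F : Fin r → V → Bool, (∏ k, ∏ v, if F k v then p else 1 - p) *
      ((if ∀ v ∈ s, F i v = true then (1:ℝ) else 0) * (if ∀ v ∈ s', F i' v = true then (1:ℝ) else 0))
      = if i = i' then p ^ ((s ∪ s').card) else p ^ s.card * p ^ s'.card := by
  by_cases hii : i = i'
  · subst hii
    rw [if_pos rfl]
    have hA := measure_A r p (fun k => if k = i then s ∪ s' else ∅)
    have hprod : (∏ k : Fin r, p ^ ((if k = i then s ∪ s' else ∅).card : ℕ))
        = p ^ ((s ∪ s').card) := by
      rw [← Finset.prod_subset (Finset.subset_univ ({i} : Finset (Fin r)))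
        (fun k _ hk => ?_), Finset.prod_singleton]
      · simp
      · simp only [Finset.mem_singleton] at hk
        simp [hk]
    refine Eq.trans ?_ (hA.trans hprod)
    apply Finset.sum_congr rfl
    intro F _
    congr 1
    have hcond : (∀ k : Fin r, ∀ v ∈ (if k = i then s ∪ s' else ∅), F k v = true)
        ↔ ((∀ v ∈ s, F i v = true) ∧ (∀ v ∈ s', F i v = true)) := by
      constructor
      · intro H
        constructor
        · intro v hv; have := H i v; simp at this
          exact this (Or.inl hv)
        · intro v hv; have := H i v; simp at this
          exact this (Or.inr hv)
      · rintro ⟨H1, H2⟩ k v hv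
        by_cases hk : k = i
        · subst hk; simp at hv
          rcases hv with hv | hv
          · exact H1 v hv
          · exact H2 v hv
        · simp [hk] at hv
    by_cases h1 : ∀ v ∈ s, F i v = true <;> by_cases h2 : ∀ v ∈ s', F i v = true
    · rw [if_pos h1, if_pos h2, if_pos (hcond.mpr ⟨h1, h2⟩), one_mul]
    · rw [if_neg h2, mul_zero, if_neg (fun H => h2 (hcond.mp H).2)]
    · rw [if_neg h1, zero_mul, if_neg (fun H => h1 (hcond.mp H).1)]
    · rw [if_neg h1, zero_mul, if_neg (fun H => h1 (hcond.mp H).1)]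
  · rw [if_neg hii]
    have hA := measure_A r p (fun k => if k = i then s else if k = i' then s' else ∅)
    have hprod : (∏ k : Fin r, p ^ ((if k = i then s else if k = i' then s' else ∅).card : ℕ))
        = p ^ s.card * p ^ s'.card := by
      rw [← Finset.prod_subset (Finset.subset_univ ({i, i'} : Finset (Fin r)))
        (fun k _ hk => ?_), Finset.prod_pair hii]
      · simp [hii, Ne.symm hii]
      · simp only [Finset.mem_insert, Finset.mem_singleton] at hk
        push_neg at hk
        simp [hk.1, hk.2]
    refine Eq.trans ?_ (hA.trans hprod)
    apply Finset.sum_congr rfl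
    intro F _
    congr 1
    have hcond : (∀ k : Fin r, ∀ v ∈ (if k = i then s else if k = i' then s' else ∅), F k v = true)
        ↔ ((∀ v ∈ s, F i v = true) ∧ (∀ v ∈ s', F i' v = true)) := by
      constructor
      · intro H
        refine ⟨fun v hv => ?_, fun v hv => ?_⟩
        · have := H i v; simp at this; exact this hv
        · have := H i' v; simp [Ne.symm hii] at this; exact this hv
      · rintro ⟨H1, H2⟩ k v hv
        by_cases hk : k = i
        · subst hk; simp at hv; exact H1 v hv
        · by_cases hk' : k = i'
          · subst hk'; simp [hk] at hv; exact H2 v hv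
          · simp [hk, hk'] at hv
    by_cases h1 : ∀ v ∈ s, F i v = true <;> by_cases h2 : ∀ v ∈ s', F i' v = true
    · rw [if_pos h1, if_pos h2, if_pos (hcond.mpr ⟨h1, h2⟩), one_mul]
    · rw [if_neg h2, mul_zero, if_neg (fun H => h2 (hcond.mp H).2)]
    · rw [if_neg h1, zero_mul, if_neg (fun H => h1 (hcond.mp H).1)]
    · rw [if_neg h1, zero_mul, if_neg (fun H => h1 (hcond.mp H).1)]

end


section
variable {V : Type*} [Fintype V] [DecidableEq V] (G : SimpleGraph V) (h : ℕ) [NeZero h]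

noncomputable def Wfin : Finset (ZMod h → V) :=
  Finset.univ.filter (fun w => Function.Injective w ∧ ∀ i : ZMod h, G.Adj (w i) (w (i + 1)))

lemma two_ne_zero_zmod (hh : 3 ≤ h) : (2 : ZMod h) ≠ 0 := by
  intro h2
  have : ((2 : ℕ) : ZMod h) = 0 := by exact_mod_cast h2
  rw [ZMod.natCast_eq_zero_iff] at this
  have := Nat.le_of_dvd (by norm_num) this
  omega

lemma fiber_ge (hh : 3 ≤ h) (s : Finset V) (hs : IsCycleSet G h s) :
    2 * h ≤ ((Wfin G h).filter (fun w => Finset.image w Finset.univ = s)).card := by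
  obtain ⟨w₀, hinj, hadj, him⟩ := hs
  set Φ : ZMod h × Bool → (ZMod h → V) :=
    fun kb => fun j => w₀ (if kb.2 then j + kb.1 else kb.1 - j) with hΦ
  have hσinj : ∀ k : ZMod h, ∀ b : Bool,
      Function.Injective (fun j : ZMod h => if b then j + k else k - j) := by
    intro k b j j' hjj
    cases b <;> simp only [if_true, if_false] at hjj
    · exact sub_right_injective hjj
    · exact add_left_injective k hjj
  have hσsurj : ∀ k : ZMod h, ∀ b : Bool,
      Function.Surjective (fun j : ZMod h => if b then j + k else k - j) := by
    intro k b
    exact Finite.surjective_of_injective (hσinj k b)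
  have hmem : ∀ kb : ZMod h × Bool,
      Φ kb ∈ (Wfin G h).filter (fun w => Finset.image w Finset.univ = s) := by
    rintro ⟨k, b⟩
    rw [Finset.mem_filter, Wfin, Finset.mem_filter]
    refine ⟨⟨Finset.mem_univ _, hinj.comp (hσinj k b), ?_⟩, ?_⟩
    · intro j
      cases b
      · simp only [hΦ, if_false]
        have := (hadj (k - j - 1)).symm
        rw [show k - j - 1 + 1 = k - j from by ring] at this
        rw [show k - (j + 1) = k - j - 1 from by ring]
        exact this
      · simp only [hΦ, if_true]
        have := hadj (j + k)
        rw [show j + k + 1 = j + 1 + k from by ring] at this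
        exact this
    · have : Finset.image (Φ (k, b)) Finset.univ
          = Finset.image w₀ (Finset.image (fun j : ZMod h => if b then j + k else k - j)
              Finset.univ) := by
        rw [Finset.image_image]
        rfl
      rw [this, Finset.image_univ_of_surjective (hσsurj k b), him]
  have hΦinj : Function.Injective Φ := by
    rintro ⟨k, b⟩ ⟨k', b'⟩ heq
    have hpt : ∀ j : ZMod h,
        w₀ (if b then j + k else k - j) = w₀ (if b' then j + k' else k' - j) :=
      fun j => congrFun heq j
    cases b <;> cases b'
    · have h0 := hinj (by simpa using hpt 0)
      simp only [Prod.mk.injEq]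
      exact ⟨by simpa using h0, trivial⟩
    · have h0 := hinj (by simpa using hpt 0)
      have h1 := hinj (by simpa using hpt 1)
      exfalso
      apply two_ne_zero_zmod h hh
      linear_combination h0 - h1
    · have h0 := hinj (by simpa using hpt 0)
      have h1 := hinj (by simpa using hpt 1)
      exfalso
      apply two_ne_zero_zmod h hh
      linear_combination h1 - h0
    · have h0 := hinj (by simpa using hpt 0)
      simp only [Prod.mk.injEq]
      exact ⟨by simpa using h0, trivial⟩
  calc 2 * h = (Finset.univ : Finset (ZMod h × Bool)).card := by
        simp [ZMod.card, mul_comm]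
    _ = (Finset.image Φ Finset.univ).card :=
        (Finset.card_image_of_injective _ hΦinj).symm
    _ ≤ _ := Finset.card_le_card (by
        intro w hw
        rw [Finset.mem_image] at hw
        obtain ⟨kb, _, rfl⟩ := hw
        exact hmem kb)

lemma W_card_ge (hh : 3 ≤ h) :
    2 * h * (Finset.univ.filter (fun s : Finset V => IsCycleSet G h s)).card
      ≤ (Wfin G h).card := by
  rw [Finset.card_eq_sum_card_fiberwise
    (f := fun w : ZMod h → V => Finset.image w Finset.univ)
    (t := Finset.univ.filter (fun s : Finset V => IsCycleSet G h s)) ?_]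
  · calc 2 * h * (Finset.univ.filter (fun s : Finset V => IsCycleSet G h s)).card
        = ∑ _s ∈ Finset.univ.filter (fun s : Finset V => IsCycleSet G h s), 2 * h := by
          rw [Finset.sum_const, smul_eq_mul, mul_comm]
      _ ≤ _ := by
          apply Finset.sum_le_sum
          intro s hs
          rw [Finset.mem_filter] at hs
          exact fiber_ge G h hh s hs.2
  · intro w hw
    rw [Wfin, Finset.mem_coe, Finset.mem_filter] at hw
    rw [Finset.mem_coe, Finset.mem_filter]
    exact ⟨Finset.mem_univ _, w, hw.2.1, hw.2.2, rfl⟩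

end

section
variable {V : Type*} [Fintype V] [DecidableEq V]

lemma single_measure (r : ℕ) (p : ℝ) (i : Fin r) (s : Finset V) :
    ∑ F : Fin r → V → Bool, (∏ k, ∏ v, if F k v then p else 1 - p) *
      (if ∀ v ∈ s, F i v = true then (1:ℝ) else 0) = p ^ s.card := by
  have hA := measure_A r p (fun k => if k = i then s else ∅)
  have hprod : (∏ k : Fin r, p ^ ((if k = i then s else ∅).card : ℕ)) = p ^ s.card := by
    rw [← Finset.prod_subset (Finset.subset_univ ({i} : Finset (Fin r)))
      (fun k _ hk => ?_), Finset.prod_singleton]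
    · simp
    · simp only [Finset.mem_singleton] at hk
      simp [hk]
  refine Eq.trans ?_ (hA.trans hprod)
  apply Finset.sum_congr rfl
  intro F _
  congr 1
  have hcond : (∀ k : Fin r, ∀ v ∈ (if k = i then s else ∅), F k v = true)
      ↔ (∀ v ∈ s, F i v = true) := by
    constructor
    · intro H v hv; have := H i v; simp at this; exact this hv
    · intro H k v hv
      by_cases hk : k = i
      · subst hk; simp at hv; exact H v hv
      · simp [hk] at hv
  exact (if_congr hcond.symm rfl rfl)

lemma count_inter_le (h : ℕ) [NeZero h] (VC : Finset V) (Wf : Finset (ZMod h → V))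
    (hsub : ∀ w' ∈ Wf, ∀ j : ZMod h, w' j ∈ VC) (hx1 : (1:ℝ) ≤ (VC.card : ℝ))
    (w : ZMod h → V) (hwVC : Finset.image w Finset.univ ⊆ VC)
    (hwcard : (Finset.image w Finset.univ).card ≤ h) :
    ∑ w' ∈ Wf, ((VC.card : ℝ)) ^ ((Finset.image w Finset.univ ∩ Finset.image w' Finset.univ).card)
      ≤ (((h : ℝ) + 1) * (VC.card : ℝ)) ^ h := by
  set x : ℝ := (VC.card : ℝ) with hxdef
  set s : Finset V := Finset.image w Finset.univ with hs
  have hx0 : (0:ℝ) ≤ x := by positivity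
  -- termwise bound
  have step1 : ∀ w' : ZMod h → V,
      x ^ ((s ∩ Finset.image w' Finset.univ).card)
        ≤ ∏ j : ZMod h, (if w' j ∈ s then x else 1) := by
    intro w'
    have hcard : (s ∩ Finset.image w' Finset.univ).card
        ≤ (Finset.univ.filter (fun j : ZMod h => w' j ∈ s)).card := by
      have hsub2 : s ∩ Finset.image w' Finset.univ
          ⊆ Finset.image w' (Finset.univ.filter (fun j : ZMod h => w' j ∈ s)) := by
        intro v hv
        rw [Finset.mem_inter] at hv
        obtain ⟨j, _, rfl⟩ := Finset.mem_image.mp hv.2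
        exact Finset.mem_image.mpr ⟨j, Finset.mem_filter.mpr ⟨Finset.mem_univ _, hv.1⟩, rfl⟩
      exact le_trans (Finset.card_le_card hsub2) (Finset.card_image_le)
    calc x ^ ((s ∩ Finset.image w' Finset.univ).card)
        ≤ x ^ ((Finset.univ.filter (fun j : ZMod h => w' j ∈ s)).card) :=
          pow_le_pow_right₀ hx1 hcard
      _ = ∏ j : ZMod h, (if w' j ∈ s then x else 1) := by
          rw [← Finset.prod_filter, Finset.prod_const]
  -- compare with sum over piFinset
  have step2 : ∑ w' ∈ Wf, ∏ j : ZMod h, (if w' j ∈ s then x else 1)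
      ≤ ∑ w' ∈ Fintype.piFinset (fun _ : ZMod h => VC), ∏ j : ZMod h, (if w' j ∈ s then x else 1) := by
    apply Finset.sum_le_sum_of_subset_of_nonneg
    · intro w' hw'
      rw [Fintype.mem_piFinset]
      exact fun j => hsub w' hw' j
    · intro w' _ _
      apply Finset.prod_nonneg
      intro j _
      split <;> [exact hx0; norm_num]
  have step3 : ∑ w' ∈ Fintype.piFinset (fun _ : ZMod h => VC), ∏ j : ZMod h, (if w' j ∈ s then x else 1)
      = (∑ v ∈ VC, (if v ∈ s then x else 1)) ^ h := by
    rw [← Finset.prod_univ_sum (fun _ : ZMod h => VC)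
      (fun (_ : ZMod h) (v : V) => if v ∈ s then x else 1)]
    rw [Finset.prod_const, Finset.card_univ, ZMod.card]
  have step4 : (∑ v ∈ VC, (if v ∈ s then x else 1)) ≤ ((h : ℝ) + 1) * x := by
    rw [← Finset.sum_filter_add_sum_filter_not VC (fun v => v ∈ s)]
    have h1 : ∑ v ∈ VC.filter (fun v => v ∈ s), (if v ∈ s then x else 1)
        = ((VC.filter (fun v => v ∈ s)).card : ℝ) * x := by
      rw [Finset.sum_congr rfl (fun v hv => if_pos (Finset.mem_filter.mp hv).2),
        Finset.sum_const, nsmul_eq_mul]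
    have h2 : ∑ v ∈ VC.filter (fun v => ¬ v ∈ s), (if v ∈ s then x else 1)
        = ((VC.filter (fun v => ¬ v ∈ s)).card : ℝ) := by
      rw [Finset.sum_congr rfl (fun v hv => if_neg (Finset.mem_filter.mp hv).2),
        Finset.sum_const, nsmul_eq_mul, mul_one]
    rw [h1, h2]
    have c1 : ((VC.filter (fun v => v ∈ s)).card : ℝ) ≤ (h : ℝ) := by
      have : (VC.filter (fun v => v ∈ s)).card ≤ s.card :=
        Finset.card_le_card (fun v hv => (Finset.mem_filter.mp hv).2)
      have := le_trans this hwcard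
      exact_mod_cast this
    have c2 : ((VC.filter (fun v => ¬ v ∈ s)).card : ℝ) ≤ x := by
      have : (VC.filter (fun v => ¬ v ∈ s)).card ≤ VC.card :=
        Finset.card_le_card (Finset.filter_subset _ _)
      rw [hxdef]
      exact_mod_cast this
    calc ((VC.filter (fun v => v ∈ s)).card : ℝ) * x + ((VC.filter (fun v => ¬ v ∈ s)).card : ℝ)
        ≤ (h : ℝ) * x + x := by
          apply add_le_add _ (le_trans c2 (le_refl x))
          exact mul_le_mul_of_nonneg_right c1 hx0
      _ = ((h : ℝ) + 1) * x := by ring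
  calc ∑ w' ∈ Wf, x ^ ((s ∩ Finset.image w' Finset.univ).card)
      ≤ ∑ w' ∈ Wf, ∏ j : ZMod h, (if w' j ∈ s then x else 1) :=
        Finset.sum_le_sum (fun w' _ => step1 w')
    _ ≤ ∑ w' ∈ Fintype.piFinset (fun _ : ZMod h => VC), ∏ j : ZMod h, (if w' j ∈ s then x else 1) := step2
    _ = (∑ v ∈ VC, (if v ∈ s then x else 1)) ^ h := step3
    _ ≤ (((h : ℝ) + 1) * x) ^ h := by
        apply pow_le_pow_left₀ _ step4
        apply Finset.sum_nonneg
        intro v _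
        split <;> [exact hx0; norm_num]

end

set_option maxHeartbeats 2000000 in
/-- Let `G` be a finite simple undirected graph, `h ≥ 3`, `t ≥ 1` the
number of `h`-cycles, `x = |V_{C_h}(G)|`. Sample a uniformly random coloring
`φ : V → ℤ/hℤ` and, independently, `r` independent `p`-random subsets `U₁,…,U_r` of `V`
(encoded by `F : Fin r → V → Bool` with Bernoulli product weights), where `1/x ≤ p ≤ 1`
and `r ≥ 8·(4h)^{h+2}·x^h/(2ht)`. Then with probability at least `1/(2h^h)` some
`(G[U_i])_φ` contains a directed `h`-cycle, i.e. there are `i` and pairwise distinct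
vertices of `U_i` cyclically joined by arcs of `G_φ`. -/
theorem stmt_16 {V : Type*} [Fintype V] [DecidableEq V]
    (G : SimpleGraph V) (h : ℕ) [NeZero h] (hh : 3 ≤ h) (t x : ℕ)
    (ht : t = Nat.card {s : Finset V // IsCycleSet G h s}) (ht1 : 1 ≤ t)
    (hx : x = Nat.card {u : V // ∃ w : ZMod h → V, Function.Injective w ∧
        (∀ i : ZMod h, G.Adj (w i) (w (i + 1))) ∧ ∃ i, w i = u})
    (p : ℝ) (hp : 1 / (x : ℝ) ≤ p) (hp1 : p ≤ 1) (r : ℕ)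
    (hr : 8 * (4 * (h : ℝ)) ^ (h + 2) * (x : ℝ) ^ h / (2 * (h : ℝ) * (t : ℝ)) ≤ (r : ℝ)) :
    (1 : ℝ) / (2 * (h : ℝ) ^ h) ≤
      (∑ φ : V → ZMod h, ∑ F : Fin r → V → Bool,
        (∏ i : Fin r, ∏ v : V, if F i v then p else 1 - p) *
          (if ∃ i : Fin r, ∃ w : ZMod h → V, Function.Injective w ∧
              (∀ j : ZMod h, G.Adj (w j) (w (j + 1)) ∧ φ (w (j + 1)) = φ (w j) + 1) ∧
              (∀ j : ZMod h, F i (w j) = true)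
            then (1 : ℝ) else 0)) / (h : ℝ) ^ (Fintype.card V) := by
  classical
  -- setup
  set n := Fintype.card V with hn
  set W : Finset (ZMod h → V) := Wfin G h with hWdef
  set VC : Finset V := Finset.univ.filter (fun u : V => ∃ w : ZMod h → V,
    Function.Injective w ∧ (∀ i : ZMod h, G.Adj (w i) (w (i + 1))) ∧ ∃ i, w i = u) with hVCdef
  have hXcard : VC.card = x := by
    rw [hx, Nat.card_eq_fintype_card, Fintype.card_subtype]
  have hTcard : (Finset.univ.filter (fun s : Finset V => IsCycleSet G h s)).card = t := by
    rw [ht, Nat.card_eq_fintype_card, Fintype.card_subtype]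
  have hWt : 2 * h * t ≤ W.card := by
    rw [← hTcard]; exact W_card_ge G h hh
  have hWpos : 0 < W.card := lt_of_lt_of_le (by positivity) hWt
  obtain ⟨w₀, hw₀⟩ : W.Nonempty := Finset.card_pos.mp hWpos
  have hWmem : ∀ w ∈ W, Function.Injective w ∧ ∀ i : ZMod h, G.Adj (w i) (w (i + 1)) := by
    intro w hw
    rw [hWdef, Wfin, Finset.mem_filter] at hw
    exact hw.2
  have hsubVC : ∀ w ∈ W, ∀ j : ZMod h, w j ∈ VC := by
    intro w hw j
    rw [hVCdef, Finset.mem_filter]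
    exact ⟨Finset.mem_univ _, w, (hWmem w hw).1, (hWmem w hw).2, j, rfl⟩
  have himsub : ∀ w ∈ W, Finset.image w Finset.univ ⊆ VC := by
    intro w hw v hv
    obtain ⟨j, _, rfl⟩ := Finset.mem_image.mp hv
    exact hsubVC w hw j
  have himcard : ∀ w ∈ W, (Finset.image w Finset.univ).card = h := by
    intro w hw
    rw [Finset.card_image_of_injective _ (hWmem w hw).1, Finset.card_univ, ZMod.card]
  have hhx : h ≤ x := by
    rw [← hXcard, ← himcard w₀ hw₀]
    exact Finset.card_le_card (himsub w₀ hw₀)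
  have hxn : x ≤ n := by
    rw [← hXcard, hn]
    exact Finset.card_le_univ VC
  have hhn : h ≤ n := le_trans hhx hxn
  have hx0 : (0:ℝ) < (x:ℝ) := by
    have : 0 < x := lt_of_lt_of_le (Nat.pos_of_ne_zero (NeZero.ne h)) hhx
    exact_mod_cast this
  have hx1 : (1:ℝ) ≤ (x:ℝ) := by
    have : 1 ≤ x := le_trans (Nat.pos_of_ne_zero (NeZero.ne h)) hhx
    exact_mod_cast this
  have hp0 : 0 < p := lt_of_lt_of_le (by positivity) hp
  have hpx : 1 ≤ p * (x:ℝ) := by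
    rw [div_le_iff₀ hx0] at hp
    linarith
  have hh0 : (0:ℝ) < (h:ℝ) := by
    have : 0 < h := Nat.pos_of_ne_zero (NeZero.ne h)
    exact_mod_cast this
  have ht0 : (0:ℝ) < (t:ℝ) := by exact_mod_cast ht1
  -- real abbreviations
  set K : ℝ := (h:ℝ) * (h:ℝ) ^ (n - h) with hKdef
  set q : ℝ := p ^ h with hqdef
  set m : ℝ := (W.card : ℝ) with hmdef
  set R : ℝ := (r : ℝ) with hRdef
  have hK0 : 0 < K := by positivity
  have hq0 : 0 < q := by positivity
  have hm0 : 0 < m := by rw [hmdef]; exact_mod_cast hWpos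
  have hR0 : 0 < R := by
    have hnum : (0:ℝ) < 8 * (4 * (h : ℝ)) ^ (h + 2) * (x : ℝ) ^ h / (2 * (h : ℝ) * (t : ℝ)) := by
      positivity
    rw [hRdef]; linarith
  have hm2ht : 2 * (h:ℝ) * (t:ℝ) ≤ m := by
    rw [hmdef]
    have := hWt
    push_cast
    exact_mod_cast hWt
  have hhR : (3:ℝ) ≤ (h:ℝ) := by exact_mod_cast hh
  have hRm : ((h:ℝ) + 1) ^ h * (x:ℝ) ^ h ≤ R * m := by
    have h2ht : (0:ℝ) < 2 * (h:ℝ) * (t:ℝ) := by positivity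
    rw [div_le_iff₀ h2ht] at hr
    have step : 8 * (4*(h:ℝ))^(h+2) * (x:ℝ)^h ≤ R * m := by
      calc 8 * (4*(h:ℝ))^(h+2) * (x:ℝ)^h ≤ R * (2*(h:ℝ)*(t:ℝ)) := hr
        _ ≤ R * m := mul_le_mul_of_nonneg_left hm2ht hR0.le
    refine le_trans ?_ step
    apply mul_le_mul_of_nonneg_right _ (pow_nonneg hx0.le h)
    calc ((h:ℝ)+1)^h ≤ (4*(h:ℝ))^h := by
          apply pow_le_pow_left₀ (by positivity) (by linarith)
      _ ≤ (4*(h:ℝ))^(h+2) := by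
          exact pow_le_pow_right₀ (by linarith) (Nat.le_add_right h 2)
      _ ≤ 8 * (4*(h:ℝ))^(h+2) := by
          nlinarith [pow_pos (show (0:ℝ) < 4*(h:ℝ) by linarith) (h+2)]
  -- measure and indicators
  set μ : (Fin r → V → Bool) → ℝ := fun F => ∏ i, ∏ v, if F i v then p else 1 - p with hμdef
  have hμ0 : ∀ F, 0 ≤ μ F := by
    intro F
    apply Finset.prod_nonneg; intro i _
    apply Finset.prod_nonneg; intro v _
    split <;> linarith
  set colI : (V → ZMod h) → (ZMod h → V) → ℝ :=
    fun φ w => if (∀ j : ZMod h, φ (w (j+1)) = φ (w j) + 1) then 1 else 0 with hcolIdef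
  set conI : (Fin r → V → Bool) → Fin r → (ZMod h → V) → ℝ :=
    fun F i w => if (∀ j : ZMod h, F i (w j) = true) then 1 else 0 with hconIdef
  set X : (V → ZMod h) → (Fin r → V → Bool) → ℝ :=
    fun φ F => ∑ z ∈ Finset.univ ×ˢ W, colI φ z.2 * conI F z.1 z.2 with hXdef
  -- per-pair expectations
  have hcol_sum : ∀ w ∈ W, ∑ φ : V → ZMod h, colI φ w = K := by
    intro w hw
    simp only [hcolIdef]
    rw [Finset.sum_boole, count_col h w (hWmem w hw).1, hKdef]
    push_cast
    ring
  have hcol_nonneg : ∀ φ w, 0 ≤ colI φ w := by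
    intro φ w; rw [hcolIdef]; dsimp only; split <;> norm_num
  have hcon_nonneg : ∀ F i w, 0 ≤ conI F i w := by
    intro F i w; rw [hconIdef]; dsimp only; split <;> norm_num
  have hcol_pair : ∀ w ∈ W, ∀ w' : ZMod h → V,
      ∑ φ : V → ZMod h, colI φ w * colI φ w' ≤ K := by
    intro w hw w'
    calc ∑ φ : V → ZMod h, colI φ w * colI φ w'
        ≤ ∑ φ : V → ZMod h, colI φ w := by
          apply Finset.sum_le_sum
          intro φ _
          apply mul_le_of_le_one_right (hcol_nonneg φ w)
          simp only [hcolIdef]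
          split <;> norm_num
      _ = K := hcol_sum w hw
  have hcol_pair0 : ∀ w w' : ZMod h → V,
      0 ≤ ∑ φ : V → ZMod h, colI φ w * colI φ w' := by
    intro w w'
    apply Finset.sum_nonneg
    intro φ _
    exact mul_nonneg (hcol_nonneg φ w) (hcol_nonneg φ w')
  have hcon_sum : ∀ (i : Fin r), ∀ w ∈ W, ∑ F : Fin r → V → Bool, μ F * conI F i w = q := by
    intro i w hw
    have hsm := single_measure r p i (Finset.image w Finset.univ)
    rw [himcard w hw] at hsm
    rw [hqdef, ← hsm]
    apply Finset.sum_congr rfl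
    intro F _
    simp only [hμdef, hconIdef]
    congr 1
    refine if_congr ?_ rfl rfl
    constructor
    · intro H v hv
      obtain ⟨j, _, rfl⟩ := Finset.mem_image.mp hv
      exact H j
    · intro H j
      exact H (w j) (Finset.mem_image.mpr ⟨j, Finset.mem_univ _, rfl⟩)
  have hcon_pair : ∀ (i i' : Fin r), ∀ w ∈ W, ∀ w' ∈ W,
      ∑ F : Fin r → V → Bool, μ F * (conI F i w * conI F i' w')
        ≤ q * q * (1 + (if i = i' then
            (x:ℝ) ^ ((Finset.image w Finset.univ ∩ Finset.image w' Finset.univ).card) else 0)) := by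
    intro i i' w hw w' hw'
    have hpm := pair_measure r p i i' (Finset.image w Finset.univ) (Finset.image w' Finset.univ)
    have heq : ∑ F : Fin r → V → Bool, μ F * (conI F i w * conI F i' w')
        = if i = i' then p ^ ((Finset.image w Finset.univ ∪ Finset.image w' Finset.univ).card)
          else p ^ (Finset.image w Finset.univ).card * p ^ (Finset.image w' Finset.univ).card := by
      rw [← hpm]
      apply Finset.sum_congr rfl
      intro F _
      simp only [hμdef, hconIdef]
      congr 1
      have e1 : (∀ j : ZMod h, F i (w j) = true) ↔ (∀ v ∈ Finset.image w Finset.univ, F i v = true) := by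
        constructor
        · intro H v hv
          obtain ⟨j, _, rfl⟩ := Finset.mem_image.mp hv
          exact H j
        · intro H j
          exact H (w j) (Finset.mem_image.mpr ⟨j, Finset.mem_univ _, rfl⟩)
      have e2 : (∀ j : ZMod h, F i' (w' j) = true) ↔ (∀ v ∈ Finset.image w' Finset.univ, F i' v = true) := by
        constructor
        · intro H v hv
          obtain ⟨j, _, rfl⟩ := Finset.mem_image.mp hv
          exact H j
        · intro H j
          exact H (w' j) (Finset.mem_image.mpr ⟨j, Finset.mem_univ _, rfl⟩)
      rw [if_congr e1 rfl rfl, if_congr e2 rfl rfl]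
    rw [heq]
    by_cases hii : i = i'
    · subst hii
      rw [if_pos rfl, if_pos rfl]
      set u : ℕ := (Finset.image w Finset.univ ∪ Finset.image w' Finset.univ).card with hu
      set c : ℕ := (Finset.image w Finset.univ ∩ Finset.image w' Finset.univ).card with hc
      have hcards : u + c = h + h := by
        rw [hu, hc, Finset.card_union_add_card_inter, himcard w hw, himcard w' hw']
      have key : q * q * (x:ℝ)^c = p^u * (p * (x:ℝ))^c := by
        rw [hqdef, ← pow_add, mul_pow, show h + h = u + c from hcards.symm, pow_add]
        ring
      have h1 : p^u ≤ q * q * (x:ℝ)^c := by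
        rw [key]
        have : (1:ℝ) ≤ (p * (x:ℝ))^c := by
          have := pow_le_pow_left₀ (by norm_num : (0:ℝ) ≤ 1) hpx c
          simpa using this
        nlinarith [pow_pos hp0 u]
      have h2 : q * q * (x:ℝ)^c ≤ q * q * (1 + (x:ℝ)^c) := by
        apply mul_le_mul_of_nonneg_left _ (by positivity)
        linarith
      linarith
    · rw [if_neg hii, if_neg hii, himcard w hw, himcard w' hw']
      rw [hqdef]
      norm_num
  have hcon_pair0 : ∀ (i i' : Fin r) (w w' : ZMod h → V),
      0 ≤ ∑ F : Fin r → V → Bool, μ F * (conI F i w * conI F i' w') := by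
    intro i i' w w'
    apply Finset.sum_nonneg
    intro F _
    exact mul_nonneg (hμ0 F) (mul_nonneg (hcon_nonneg F i w) (hcon_nonneg F i' w'))
  -- first moment
  have hSX : ∑ φ : V → ZMod h, ∑ F : Fin r → V → Bool, μ F * X φ F = R * m * (K * q) := by
    have swap : ∑ φ : V → ZMod h, ∑ F : Fin r → V → Bool, μ F * X φ F
        = ∑ z ∈ Finset.univ ×ˢ W, ∑ φ : V → ZMod h, ∑ F : Fin r → V → Bool,
            μ F * (colI φ z.2 * conI F z.1 z.2) := by
      calc ∑ φ : V → ZMod h, ∑ F : Fin r → V → Bool, μ F * X φ F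
          = ∑ φ : V → ZMod h, ∑ F : Fin r → V → Bool, ∑ z ∈ Finset.univ ×ˢ W,
              μ F * (colI φ z.2 * conI F z.1 z.2) := by
            apply Finset.sum_congr rfl
            intro φ _
            apply Finset.sum_congr rfl
            intro F _
            simp only [hXdef]
            rw [Finset.mul_sum]
        _ = ∑ φ : V → ZMod h, ∑ z ∈ Finset.univ ×ˢ W, ∑ F : Fin r → V → Bool,
              μ F * (colI φ z.2 * conI F z.1 z.2) := by
            apply Finset.sum_congr rfl
            intro φ _
            exact Finset.sum_comm
        _ = ∑ z ∈ Finset.univ ×ˢ W, ∑ φ : V → ZMod h, ∑ F : Fin r → V → Bool,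
              μ F * (colI φ z.2 * conI F z.1 z.2) := Finset.sum_comm
    rw [swap]
    have per_z : ∀ z ∈ (Finset.univ ×ˢ W : Finset (Fin r × (ZMod h → V))),
        ∑ φ : V → ZMod h, ∑ F : Fin r → V → Bool, μ F * (colI φ z.2 * conI F z.1 z.2)
          = K * q := by
      intro z hz
      have hzW : z.2 ∈ W := (Finset.mem_product.mp hz).2
      have inner : ∀ φ : V → ZMod h,
          ∑ F : Fin r → V → Bool, μ F * (colI φ z.2 * conI F z.1 z.2)
            = colI φ z.2 * ∑ F : Fin r → V → Bool, μ F * conI F z.1 z.2 := by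
        intro φ
        rw [Finset.mul_sum]
        apply Finset.sum_congr rfl
        intro F _
        ring
      rw [Finset.sum_congr rfl fun φ _ => inner φ]
      rw [← Finset.sum_mul, hcol_sum z.2 hzW, hcon_sum z.1 z.2 hzW]
    rw [Finset.sum_congr rfl per_z, Finset.sum_const, Finset.card_product, nsmul_eq_mul]
    rw [Finset.card_univ, Fintype.card_fin]
    rw [hmdef, hRdef]
    push_cast
    ring
  -- second moment
  have hZcard : (((Finset.univ ×ˢ W : Finset (Fin r × (ZMod h → V)))).card : ℝ) = R * m := by
    rw [Finset.card_product, Finset.card_univ, Fintype.card_fin, hmdef, hRdef]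
    push_cast
    ring
  have hCL : ∀ w ∈ W, ∑ w' ∈ W,
      (x:ℝ) ^ ((Finset.image w Finset.univ ∩ Finset.image w' Finset.univ).card) ≤ R * m := by
    intro w hw
    have hone : (1:ℝ) ≤ ((VC.card : ℕ) : ℝ) := by rw [hXcard]; exact hx1
    have hcl := count_inter_le h VC W hsubVC hone w (himsub w hw) (le_of_eq (himcard w hw))
    rw [hXcard] at hcl
    calc ∑ w' ∈ W, (x:ℝ) ^ ((Finset.image w Finset.univ ∩ Finset.image w' Finset.univ).card)
        ≤ (((h:ℝ) + 1) * (x:ℝ)) ^ h := hcl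
      _ = ((h:ℝ) + 1) ^ h * (x:ℝ) ^ h := mul_pow _ _ _
      _ ≤ R * m := hRm
  have hSX2 : ∑ φ : V → ZMod h, ∑ F : Fin r → V → Bool, μ F * (X φ F)^2
      ≤ 2 * K * (q * q) * ((R * m) * (R * m)) := by
    set Z : Finset (Fin r × (ZMod h → V)) := Finset.univ ×ˢ W with hZdef
    set g : Fin r × (ZMod h → V) → Fin r × (ZMod h → V) → (V → ZMod h) → (Fin r → V → Bool) → ℝ :=
      fun z z' φ F => μ F * ((colI φ z.2 * conI F z.1 z.2) * (colI φ z'.2 * conI F z'.1 z'.2))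
      with hgdef
    have expand : ∑ φ : V → ZMod h, ∑ F : Fin r → V → Bool, μ F * (X φ F)^2
        = ∑ z ∈ Z, ∑ z' ∈ Z, ∑ φ : V → ZMod h, ∑ F : Fin r → V → Bool, g z z' φ F := by
      calc ∑ φ : V → ZMod h, ∑ F : Fin r → V → Bool, μ F * (X φ F)^2
          = ∑ φ : V → ZMod h, ∑ F : Fin r → V → Bool, ∑ z ∈ Z, ∑ z' ∈ Z, g z z' φ F := by
            apply Finset.sum_congr rfl
            intro φ _
            apply Finset.sum_congr rfl
            intro F _
            simp only [hXdef, hgdef]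
            rw [pow_two, Finset.sum_mul_sum, Finset.mul_sum]
            apply Finset.sum_congr rfl
            intro z _
            rw [Finset.mul_sum]
        _ = ∑ φ : V → ZMod h, ∑ z ∈ Z, ∑ F : Fin r → V → Bool, ∑ z' ∈ Z, g z z' φ F := by
            apply Finset.sum_congr rfl
            intro φ _
            exact Finset.sum_comm
        _ = ∑ z ∈ Z, ∑ φ : V → ZMod h, ∑ F : Fin r → V → Bool, ∑ z' ∈ Z, g z z' φ F :=
            Finset.sum_comm
        _ = ∑ z ∈ Z, ∑ φ : V → ZMod h, ∑ z' ∈ Z, ∑ F : Fin r → V → Bool, g z z' φ F := by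
            apply Finset.sum_congr rfl
            intro z _
            apply Finset.sum_congr rfl
            intro φ _
            exact Finset.sum_comm
        _ = ∑ z ∈ Z, ∑ z' ∈ Z, ∑ φ : V → ZMod h, ∑ F : Fin r → V → Bool, g z z' φ F := by
            apply Finset.sum_congr rfl
            intro z _
            exact Finset.sum_comm
    have factor : ∀ z ∈ Z, ∀ z' ∈ Z,
        ∑ φ : V → ZMod h, ∑ F : Fin r → V → Bool, g z z' φ F
          = (∑ φ : V → ZMod h, colI φ z.2 * colI φ z'.2)
            * (∑ F : Fin r → V → Bool, μ F * (conI F z.1 z.2 * conI F z'.1 z'.2)) := by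
      intro z _ z' _
      rw [Finset.sum_mul]
      apply Finset.sum_congr rfl
      intro φ _
      rw [Finset.mul_sum]
      apply Finset.sum_congr rfl
      intro F _
      simp only [hgdef]
      ring
    have bound1 : ∀ z ∈ Z, ∀ z' ∈ Z,
        ∑ φ : V → ZMod h, ∑ F : Fin r → V → Bool, g z z' φ F
          ≤ K * (q * q * (1 + (if z.1 = z'.1 then
              (x:ℝ) ^ ((Finset.image z.2 Finset.univ ∩ Finset.image z'.2 Finset.univ).card)
              else 0))) := by
      intro z hz z' hz'
      have hzW : z.2 ∈ W := (Finset.mem_product.mp hz).2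
      have hz'W : z'.2 ∈ W := (Finset.mem_product.mp hz').2
      rw [factor z hz z' hz']
      apply mul_le_mul (hcol_pair z.2 hzW z'.2)
        (hcon_pair z.1 z'.1 z.2 hzW z'.2 hz'W)
        (hcon_pair0 z.1 z'.1 z.2 z'.2) hK0.le
    calc ∑ φ : V → ZMod h, ∑ F : Fin r → V → Bool, μ F * (X φ F)^2
        ≤ ∑ z ∈ Z, ∑ z' ∈ Z, K * (q * q * (1 + (if z.1 = z'.1 then
            (x:ℝ) ^ ((Finset.image z.2 Finset.univ ∩ Finset.image z'.2 Finset.univ).card)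
            else 0))) := by
          rw [expand]
          apply Finset.sum_le_sum
          intro z hz
          apply Finset.sum_le_sum
          intro z' hz'
          exact bound1 z hz z' hz'
      _ = ∑ z ∈ Z, ∑ z' ∈ Z, (K * (q * q)
            + K * (q * q) * (if z.1 = z'.1 then
              (x:ℝ) ^ ((Finset.image z.2 Finset.univ ∩ Finset.image z'.2 Finset.univ).card)
              else 0)) := by
          apply Finset.sum_congr rfl
          intro z _
          apply Finset.sum_congr rfl
          intro z' _
          ring
      _ = (∑ z ∈ Z, ∑ z' ∈ Z, K * (q * q))
            + ∑ z ∈ Z, ∑ z' ∈ Z, K * (q * q) * (if z.1 = z'.1 then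
              (x:ℝ) ^ ((Finset.image z.2 Finset.univ ∩ Finset.image z'.2 Finset.univ).card)
              else 0) := by
          rw [← Finset.sum_add_distrib]
          apply Finset.sum_congr rfl
          intro z _
          rw [← Finset.sum_add_distrib]
      _ ≤ (R * m) * (R * m) * (K * (q * q)) + K * (q * q) * ((R * m) * (R * m)) := by
          apply add_le_add
          · rw [Finset.sum_const, Finset.sum_const, nsmul_eq_mul, nsmul_eq_mul, ← mul_assoc,
              hZcard]
          · have inner_bd : ∀ z ∈ Z,
                ∑ z' ∈ Z, (if z.1 = z'.1 then
                  (x:ℝ) ^ ((Finset.image z.2 Finset.univ ∩ Finset.image z'.2 Finset.univ).card)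
                  else 0) ≤ R * m := by
              intro z hz
              have hzW : z.2 ∈ W := (Finset.mem_product.mp hz).2
              have : ∑ z' ∈ Z, (if z.1 = z'.1 then
                  (x:ℝ) ^ ((Finset.image z.2 Finset.univ ∩ Finset.image z'.2 Finset.univ).card)
                  else 0)
                  = ∑ i' : Fin r, ∑ w' ∈ W, (if z.1 = i' then
                    (x:ℝ) ^ ((Finset.image z.2 Finset.univ ∩ Finset.image w' Finset.univ).card)
                    else 0) := by
                rw [hZdef, Finset.sum_product]
              rw [this]
              have step : ∀ i' : Fin r,
                  ∑ w' ∈ W, (if z.1 = i' then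
                    (x:ℝ) ^ ((Finset.image z.2 Finset.univ ∩ Finset.image w' Finset.univ).card)
                    else 0)
                  = (if z.1 = i' then ∑ w' ∈ W,
                    (x:ℝ) ^ ((Finset.image z.2 Finset.univ ∩ Finset.image w' Finset.univ).card)
                    else 0) := by
                intro i'
                split <;> simp
              rw [Finset.sum_congr rfl fun i' _ => step i', Finset.sum_ite_eq, if_pos (Finset.mem_univ _)]
              exact hCL z.2 hzW
            calc ∑ z ∈ Z, ∑ z' ∈ Z, K * (q * q) * (if z.1 = z'.1 then
                  (x:ℝ) ^ ((Finset.image z.2 Finset.univ ∩ Finset.image z'.2 Finset.univ).card)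
                  else 0)
                = K * (q * q) * ∑ z ∈ Z, ∑ z' ∈ Z, (if z.1 = z'.1 then
                  (x:ℝ) ^ ((Finset.image z.2 Finset.univ ∩ Finset.image z'.2 Finset.univ).card)
                  else 0) := by
                  rw [Finset.mul_sum]
                  apply Finset.sum_congr rfl
                  intro z _
                  rw [Finset.mul_sum]
              _ ≤ K * (q * q) * ∑ _z ∈ Z, (R * m) := by
                  apply mul_le_mul_of_nonneg_left _ (by positivity)
                  apply Finset.sum_le_sum
                  exact inner_bd
              _ = K * (q * q) * ((R * m) * (R * m)) := by
                  rw [Finset.sum_const, nsmul_eq_mul, hZcard]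
      _ = 2 * K * (q * q) * ((R * m) * (R * m)) := by ring
  -- event
  set ind : (V → ZMod h) → (Fin r → V → Bool) → ℝ := fun φ F =>
    if ∃ i : Fin r, ∃ w : ZMod h → V, Function.Injective w ∧
        (∀ j : ZMod h, G.Adj (w j) (w (j + 1)) ∧ φ (w (j + 1)) = φ (w j) + 1) ∧
        (∀ j : ZMod h, F i (w j) = true)
      then (1 : ℝ) else 0 with hinddef
  have hXind : ∀ φ F, X φ F * ind φ F = X φ F := by
    intro φ F
    by_cases hE : ∃ i : Fin r, ∃ w : ZMod h → V, Function.Injective w ∧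
        (∀ j : ZMod h, G.Adj (w j) (w (j + 1)) ∧ φ (w (j + 1)) = φ (w j) + 1) ∧
        (∀ j : ZMod h, F i (w j) = true)
    · simp only [hinddef]
      rw [if_pos hE, mul_one]
    · have hX0 : X φ F = 0 := by
        simp only [hXdef]
        apply Finset.sum_eq_zero
        intro z hz
        have hzW : z.2 ∈ W := (Finset.mem_product.mp hz).2
        by_cases hc : ∀ j : ZMod h, φ (z.2 (j+1)) = φ (z.2 j) + 1
        · by_cases hd : ∀ j : ZMod h, F z.1 (z.2 j) = true
          · exfalso
            exact hE ⟨z.1, z.2, (hWmem z.2 hzW).1,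
              fun j => ⟨(hWmem z.2 hzW).2 j, hc j⟩, hd⟩
          · simp only [hconIdef]
            rw [if_neg hd, mul_zero]
        · simp only [hcolIdef]
          rw [if_neg hc, zero_mul]
      rw [hX0, zero_mul]
  have hCS : (∑ φ : V → ZMod h, ∑ F : Fin r → V → Bool, μ F * X φ F)^2
      ≤ (∑ φ : V → ZMod h, ∑ F : Fin r → V → Bool, μ F * (X φ F)^2)
        * (∑ φ : V → ZMod h, ∑ F : Fin r → V → Bool, μ F * ind φ F) := by
    have hprod : ∀ g : (V → ZMod h) → (Fin r → V → Bool) → ℝ,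
        ∑ φ : V → ZMod h, ∑ F : Fin r → V → Bool, g φ F
          = ∑ ω ∈ (Finset.univ ×ˢ Finset.univ :
              Finset ((V → ZMod h) × (Fin r → V → Bool))), g ω.1 ω.2 := by
      intro g
      rw [Finset.sum_product]
    rw [hprod (fun φ F => μ F * X φ F), hprod (fun φ F => μ F * (X φ F)^2),
      hprod (fun φ F => μ F * ind φ F)]
    have hCS0 := Finset.sum_mul_sq_le_sq_mul_sq
      (Finset.univ ×ˢ Finset.univ : Finset ((V → ZMod h) × (Fin r → V → Bool)))
      (fun ω => Real.sqrt (μ ω.2) * X ω.1 ω.2)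
      (fun ω => Real.sqrt (μ ω.2) * ind ω.1 ω.2)
    have e1 : ∀ ω : (V → ZMod h) × (Fin r → V → Bool),
        (Real.sqrt (μ ω.2) * X ω.1 ω.2) * (Real.sqrt (μ ω.2) * ind ω.1 ω.2)
          = μ ω.2 * X ω.1 ω.2 := by
      intro ω
      rw [show (Real.sqrt (μ ω.2) * X ω.1 ω.2) * (Real.sqrt (μ ω.2) * ind ω.1 ω.2)
          = (Real.sqrt (μ ω.2) * Real.sqrt (μ ω.2)) * (X ω.1 ω.2 * ind ω.1 ω.2) from by ring,
        Real.mul_self_sqrt (hμ0 ω.2), hXind ω.1 ω.2]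
    have e2 : ∀ ω : (V → ZMod h) × (Fin r → V → Bool),
        (Real.sqrt (μ ω.2) * X ω.1 ω.2)^2 = μ ω.2 * (X ω.1 ω.2)^2 := by
      intro ω
      rw [mul_pow, Real.sq_sqrt (hμ0 ω.2)]
    have e3 : ∀ ω : (V → ZMod h) × (Fin r → V → Bool),
        (Real.sqrt (μ ω.2) * ind ω.1 ω.2)^2 = μ ω.2 * ind ω.1 ω.2 := by
      intro ω
      rw [mul_pow, Real.sq_sqrt (hμ0 ω.2)]
      congr 1
      simp only [hinddef]
      split <;> norm_num
    rw [Finset.sum_congr rfl fun ω _ => e1 ω, Finset.sum_congr rfl fun ω _ => e2 ω,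
      Finset.sum_congr rfl fun ω _ => e3 ω] at hCS0
    exact hCS0
  -- conclusion
  set SE : ℝ := ∑ φ : V → ZMod h, ∑ F : Fin r → V → Bool, μ F * ind φ F with hSEdef
  have hSE0 : 0 ≤ SE := by
    rw [hSEdef]
    apply Finset.sum_nonneg
    intro φ _
    apply Finset.sum_nonneg
    intro F _
    apply mul_nonneg (hμ0 F)
    simp only [hinddef]
    split <;> norm_num
  have hc1 : (R * m * (K * q))^2 ≤ (2 * K * (q * q) * ((R * m) * (R * m))) * SE := by
    calc (R * m * (K * q))^2
        = (∑ φ : V → ZMod h, ∑ F : Fin r → V → Bool, μ F * X φ F)^2 := by rw [hSX]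
      _ ≤ (∑ φ : V → ZMod h, ∑ F : Fin r → V → Bool, μ F * (X φ F)^2) * SE := hCS
      _ ≤ (2 * K * (q * q) * ((R * m) * (R * m))) * SE :=
          mul_le_mul_of_nonneg_right hSX2 hSE0
  have hK2SE : K ≤ 2 * SE := by
    have hpos : 0 < K * ((q * q) * ((R * m) * (R * m))) := by positivity
    have e1 : (R * m * (K * q))^2 = K * (K * ((q * q) * ((R * m) * (R * m)))) := by ring
    have e2 : (2 * K * (q * q) * ((R * m) * (R * m))) * SE
        = (2 * SE) * (K * ((q * q) * ((R * m) * (R * m)))) := by ring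
    rw [e1, e2] at hc1
    exact le_of_mul_le_mul_right hc1 hpos
  have final : (1:ℝ) / (2 * (h:ℝ)^h) ≤ SE / (h:ℝ)^n := by
    rw [div_le_div_iff₀ (by positivity) (by positivity)]
    have hKh : K * (h:ℝ)^h = (h:ℝ) * (h:ℝ)^n := by
      rw [hKdef, mul_assoc, ← pow_add, Nat.sub_add_cancel hhn]
    calc (1:ℝ) * (h:ℝ)^n ≤ (h:ℝ) * (h:ℝ)^n :=
        mul_le_mul_of_nonneg_right (by linarith) (pow_nonneg hh0.le n)
      _ = K * (h:ℝ)^h := hKh.symm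
      _ ≤ (2 * SE) * (h:ℝ)^h := mul_le_mul_of_nonneg_right hK2SE (pow_nonneg hh0.le h)
      _ = SE * (2 * (h:ℝ)^h) := by ring
  exact final
end

section
/- Let G be a finite simple undirected graph with t ≥ 1 triangles, and let U be a p-random subset of V with p ∈ (0,1]. Then the probability that the induced subgraph G[U] contains a triangle is at least t·p³/(1 + 2·t·p); in particular, if p ≥ 1/t then this probability is at least p²/3. -/
open scoped Classical
open Finset

lemma stmt17_key {V : Type*} [Fintype V] [DecidableEq V] (p : ℝ) (c : Finset V) :
    ∑ s : Finset V, p ^ s.card * (1 - p) ^ (Fintype.card V - s.card) *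
        (if c ⊆ s then (1 : ℝ) else 0) = p ^ c.card := by
  have h : ∀ s : Finset V,
      p ^ s.card * (1 - p) ^ (Fintype.card V - s.card) * (if c ⊆ s then (1:ℝ) else 0)
        = (∏ _v ∈ s, p) * ∏ v ∈ (univ \ s), (if v ∈ c then 0 else (1 - p)) := by
    intro s
    rw [Finset.prod_const]
    by_cases hcs : c ⊆ s
    · have hcong : ∀ v ∈ univ \ s, (if v ∈ c then (0:ℝ) else (1 - p)) = 1 - p := by
        intro v hv; rw [if_neg]; intro hvc; exact (Finset.mem_sdiff.mp hv).2 (hcs hvc)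
      rw [Finset.prod_congr rfl hcong, Finset.prod_const, if_pos hcs,
        Finset.card_sdiff_of_subset (Finset.subset_univ s), Finset.card_univ]
      ring
    · obtain ⟨v, hvc, hvs⟩ := Finset.not_subset.mp hcs
      have hz : ∏ v ∈ (univ \ s), (if v ∈ c then (0:ℝ) else (1 - p)) = 0 :=
        Finset.prod_eq_zero (Finset.mem_sdiff.mpr ⟨Finset.mem_univ v, hvs⟩)
          (by simp [hvc])
      rw [if_neg hcs, hz]
      ring
  rw [Finset.sum_congr rfl (fun s _ => h s), ← Finset.powerset_univ, ← Finset.prod_add]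
  have hcong2 : ∀ v ∈ (univ : Finset V),
      p + (if v ∈ c then (0:ℝ) else 1 - p) = if v ∈ c then p else 1 := by
    intro v _; split <;> ring
  rw [Finset.prod_congr rfl hcong2, Finset.prod_ite_mem, Finset.univ_inter, Finset.prod_const]

/-- Let `G` be a finite simple undirected graph with `t ≥ 1` triangles
(3-cliques), and let `U` be a `p`-random subset of `V` with `p ∈ (0,1]`. Then the
probability that the induced subgraph `G[U]` contains a triangle is at least
`t·p³/(1 + 2·t·p)`; in particular, if `p ≥ 1/t` then this probability is at least
`p²/3`. -/
theorem stmt_17 {V : Type*} [Fintype V] [DecidableEq V]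
    (G : SimpleGraph V) (t : ℕ)
    (ht : t = Nat.card {s : Finset V // G.IsNClique 3 s}) (ht1 : 1 ≤ t)
    (p : ℝ) (hp0 : 0 < p) (hp1 : p ≤ 1) :
    ((t : ℝ) * p ^ 3 / (1 + 2 * (t : ℝ) * p) ≤
      ∑ s : Finset V, p ^ s.card * (1 - p) ^ (Fintype.card V - s.card) *
        (if ∃ c : Finset V, G.IsNClique 3 c ∧ c ⊆ s then (1 : ℝ) else 0)) ∧
    (1 / (t : ℝ) ≤ p →
      p ^ 2 / 3 ≤
        ∑ s : Finset V, p ^ s.card * (1 - p) ^ (Fintype.card V - s.card) *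
          (if ∃ c : Finset V, G.IsNClique 3 c ∧ c ⊆ s then (1 : ℝ) else 0)) := by
  set n := Fintype.card V with hn
  set w : Finset V → ℝ := fun s => p ^ s.card * (1 - p) ^ (n - s.card) with hwdef
  set I : Finset V → ℝ := fun s =>
    if ∃ c : Finset V, G.IsNClique 3 c ∧ c ⊆ s then (1 : ℝ) else 0 with hIdef
  set T : Finset (Finset V) := univ.filter (fun c => G.IsNClique 3 c) with hTdef
  set X : Finset V → ℝ := fun s => ∑ c ∈ T, (if c ⊆ s then (1:ℝ) else 0) with hXdef
  have hTt : (T.card : ℝ) = t := by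
    rw [ht, Nat.card_eq_fintype_card, Fintype.card_subtype]
  have ht0' : (1:ℝ) ≤ (t:ℝ) := by exact_mod_cast ht1
  have hw0 : ∀ s, 0 ≤ w s := fun s => by
    have : (0:ℝ) ≤ 1 - p := by linarith
    positivity
  have hc3 : ∀ c ∈ T, c.card = 3 := fun c hc =>
    ((Finset.mem_filter.mp hc).2).card_eq
  -- first moment
  have hEX : ∑ s : Finset V, w s * X s = (t:ℝ) * p ^ 3 := by
    simp only [hXdef, Finset.mul_sum]
    rw [Finset.sum_comm]
    have : ∀ c ∈ T, ∑ s : Finset V, w s * (if c ⊆ s then (1:ℝ) else 0) = p ^ 3 := by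
      intro c hc
      rw [show (3:ℕ) = c.card from (hc3 c hc).symm]
      exact stmt17_key p c
    rw [Finset.sum_congr rfl this, Finset.sum_const, nsmul_eq_mul, hTt]
  -- second moment
  have hEX2 : ∑ s : Finset V, w s * (X s) ^ 2 ≤ (t:ℝ) * p ^ 3 * (1 + 2 * t * p) := by
    have hXsq : ∀ s, (X s) ^ 2 = ∑ c ∈ T, ∑ c' ∈ T, (if c ∪ c' ⊆ s then (1:ℝ) else 0) := by
      intro s
      rw [sq, hXdef, Finset.sum_mul_sum]
      refine Finset.sum_congr rfl fun c _ => Finset.sum_congr rfl fun c' _ => ?_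
      by_cases h1 : c ⊆ s <;> by_cases h2 : c' ⊆ s <;>
        simp [h1, h2, Finset.union_subset_iff]
    have step1 : ∑ s : Finset V, w s * (X s) ^ 2
        = ∑ c ∈ T, ∑ c' ∈ T, p ^ (c ∪ c').card := by
      simp only [hXsq, Finset.mul_sum]
      rw [Finset.sum_comm]
      refine Finset.sum_congr rfl fun c _ => ?_
      rw [Finset.sum_comm]
      exact Finset.sum_congr rfl fun c' _ => stmt17_key p (c ∪ c')
    have step2 : ∑ c ∈ T, ∑ c' ∈ T, p ^ (c ∪ c').card
        ≤ ∑ c ∈ T, ∑ c' ∈ T, ((if c = c' then p ^ 3 else 0) + p ^ 4) := by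
      refine Finset.sum_le_sum fun c hc => Finset.sum_le_sum fun c' hc' => ?_
      by_cases hcc : c = c'
      · subst hcc
        rw [Finset.union_self, hc3 c hc, if_pos rfl]
        nlinarith [pow_pos hp0 3, pow_pos hp0 4, pow_le_one₀ hp0.le hp1 (n := 4)]
      · rw [if_neg hcc]
        have h4 : 4 ≤ (c ∪ c').card := by
          have hss : c ⊂ c ∪ c' := by
            refine Finset.ssubset_iff_of_subset Finset.subset_union_left |>.mpr ?_
            by_contra hcon
            push_neg at hcon
            exact hcc (Finset.eq_of_subset_of_card_le
              (fun x hx => hcon x (Finset.subset_union_right hx))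
              (by rw [hc3 c hc, hc3 c' hc'])).symm
          have h := Finset.card_lt_card hss
          have h3 := hc3 c hc
          omega
        have := pow_le_pow_of_le_one hp0.le hp1 h4
        linarith
    have step3 : ∑ c ∈ T, ∑ c' ∈ T, ((if c = c' then p ^ 3 else 0) + p ^ 4)
        = (t:ℝ) * p ^ 3 + (t:ℝ)^2 * p ^ 4 := by
      have hinner : ∀ c ∈ T, ∑ c' ∈ T, ((if c = c' then p ^ 3 else 0) + p ^ 4)
          = p ^ 3 + (T.card : ℝ) * p ^ 4 := by
        intro c hc
        rw [Finset.sum_add_distrib, Finset.sum_ite_eq, if_pos hc, Finset.sum_const,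
          nsmul_eq_mul]
      rw [Finset.sum_congr rfl hinner, Finset.sum_const, nsmul_eq_mul, hTt]
      ring
    have step4 : (t:ℝ) * p ^ 3 + (t:ℝ)^2 * p ^ 4 ≤ (t:ℝ) * p ^ 3 * (1 + 2 * t * p) := by
      nlinarith [pow_pos hp0 4, ht0']
    rw [step1]
    exact le_trans step2 (le_of_eq step3 |>.trans step4)
  -- indicator facts
  have hIX : ∀ s, I s * X s = X s := by
    intro s
    by_cases h : ∃ c : Finset V, G.IsNClique 3 c ∧ c ⊆ s
    · simp [hIdef, if_pos h]
    · have hx : X s = 0 := by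
        apply Finset.sum_eq_zero
        intro c hc
        rw [if_neg]
        intro hcs
        exact h ⟨c, (Finset.mem_filter.mp hc).2, hcs⟩
      simp [hx]
  have hI2 : ∀ s, I s ^ 2 = I s := by
    intro s; simp only [hIdef]; split <;> norm_num
  have hI0 : ∀ s, 0 ≤ I s := by
    intro s; simp only [hIdef]; split <;> norm_num
  -- Cauchy–Schwarz
  have hCS := Finset.sum_mul_sq_le_sq_mul_sq (univ : Finset (Finset V))
    (fun s => Real.sqrt (w s) * I s) (fun s => Real.sqrt (w s) * X s)
  have hfg : ∀ s : Finset V,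
      (Real.sqrt (w s) * I s) * (Real.sqrt (w s) * X s) = w s * X s := by
    intro s
    rw [show (Real.sqrt (w s) * I s) * (Real.sqrt (w s) * X s)
        = (Real.sqrt (w s) * Real.sqrt (w s)) * (I s * X s) by ring,
      Real.mul_self_sqrt (hw0 s), hIX s]
  have hf2 : ∀ s : Finset V, (Real.sqrt (w s) * I s) ^ 2 = w s * I s := by
    intro s; rw [mul_pow, Real.sq_sqrt (hw0 s), hI2 s]
  have hg2 : ∀ s : Finset V, (Real.sqrt (w s) * X s) ^ 2 = w s * X s ^ 2 := by
    intro s; rw [mul_pow, Real.sq_sqrt (hw0 s)]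
  simp only [hfg, hf2, hg2] at hCS
  rw [hEX] at hCS
  have hP0 : 0 ≤ ∑ s : Finset V, w s * I s :=
    Finset.sum_nonneg fun s _ => mul_nonneg (hw0 s) (hI0 s)
  have key1 : ((t:ℝ) * p ^ 3) ^ 2
      ≤ (∑ s : Finset V, w s * I s) * ((t:ℝ) * p ^ 3 * (1 + 2 * t * p)) :=
    le_trans hCS (mul_le_mul_of_nonneg_left hEX2 hP0)
  have htp3 : 0 < (t:ℝ) * p ^ 3 :=
    mul_pos (lt_of_lt_of_le one_pos ht0') (pow_pos hp0 3)
  have hden : 0 < 1 + 2 * (t:ℝ) * p := by positivity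
  have main : (t:ℝ) * p ^ 3 / (1 + 2 * (t:ℝ) * p) ≤ ∑ s : Finset V, w s * I s := by
    rw [div_le_iff₀ hden]
    have h2 : (t:ℝ) * p ^ 3 * ((t:ℝ) * p ^ 3)
        ≤ ((∑ s : Finset V, w s * I s) * (1 + 2 * (t:ℝ) * p)) * ((t:ℝ) * p ^ 3) := by
      linear_combination key1
    exact le_of_mul_le_mul_right h2 htp3
  refine ⟨main, fun h => ?_⟩
  have ht0 : (0:ℝ) < t := lt_of_lt_of_le one_pos ht0'
  have htp1 : 1 ≤ (t:ℝ) * p := by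
    have := (div_le_iff₀ ht0).mp h
    nlinarith
  have h3 : p ^ 2 / 3 ≤ (t:ℝ) * p ^ 3 / (1 + 2 * (t:ℝ) * p) := by
    rw [div_le_div_iff₀ (by norm_num) hden]
    nlinarith [htp1, hp0, sq_nonneg p]
  exact le_trans h3 main
end
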